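/- arXiv:1212.1691 — 4 statements merged into one kernel-verified Lean document; each statement's English description precedes it below -/
import Mathlib

section
/- Let d_* > 0 and let [a,b] be a real interval with b − a ≥ d_*. Then every function f : [a,b] → ℝ whose derivative f' is absolutely continuous on [a,b] with second derivative f'' ∈ L²(a,b) satisfies ‖f'‖_{L²(a,b)} ≤ ‖f''‖_{L²(a,b)} + 2(1 + 2/d_*)² ‖f‖_{L²(a,b)}. -/
/-!
Approximate `f'` by `g t`, the slope of `f` over a window of length `h` that contains `t`,
namely the image of `[a, b]` under the homothety of ratio `r = h / (b - a)` centred at `t`.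
By the mean value theorem for integrals `g t = f' ξ` for some `ξ` in the window, so by
Cauchy–Schwarz `(f' t - g t)² ≤ h ∫_window f''²`. The window endpoints are affine in `t` with
slope `1 - r`, so integrating over `t` is a change of variables: applied to the primitive of
`f''²` it gives `‖f' - g‖² ≤ h² / (1 - r) ‖f''‖²`, applied to `f²` it gives
`‖g‖² ≤ 4 / (h² (1 - r)) ‖f‖²`. Minkowski's inequality and `h = d_* / (d_* + 1)`, for which
`h ≤ 1 - r`, give the constants.
-/

open MeasureTheory Set
open scoped Interval

section L2

variable {α : Type*} [MeasurableSpace α] {μ : Measure α} {u v : α → ℝ}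

theorem abs_integral_mul_le_sqrt_mul_sqrt (hu : MemLp u 2 μ) (hv : MemLp v 2 μ) :
    |∫ x, u x * v x ∂μ| ≤ √(∫ x, u x ^ 2 ∂μ) * √(∫ x, v x ^ 2 ∂μ) := by
  have holder := integral_mul_le_Lp_mul_Lq_of_nonneg Real.HolderConjugate.two_two
    (.of_forall fun x => abs_nonneg (u x)) (.of_forall fun x => abs_nonneg (v x))
    (by rw [ENNReal.ofReal_ofNat]; exact hu.abs) (by rw [ENNReal.ofReal_ofNat]; exact hv.abs)
  simp only [Real.rpow_two, sq_abs, ← Real.sqrt_eq_rpow] at holder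
  calc |∫ x, u x * v x ∂μ| ≤ ∫ x, |u x * v x| ∂μ := abs_integral_le_integral_abs
    _ = ∫ x, |u x| * |v x| ∂μ := by simp only [abs_mul]
    _ ≤ _ := holder

theorem sqrt_integral_add_sq_le (hu : MemLp u 2 μ) (hv : MemLp v 2 μ) :
    √(∫ x, (u x + v x) ^ 2 ∂μ) ≤ √(∫ x, u x ^ 2 ∂μ) + √(∫ x, v x ^ 2 ∂μ) := by
  have hu2 := hu.integrable_sq
  have hv2 := hv.integrable_sq
  have huv : Integrable (fun x => 2 * (u x * v x)) μ := (hu.integrable_mul hv).const_mul 2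
  have expand : ∫ x, (u x + v x) ^ 2 ∂μ
      = ∫ x, u x ^ 2 ∂μ + 2 * ∫ x, u x * v x ∂μ + ∫ x, v x ^ 2 ∂μ := by
    rw [← integral_const_mul, ← integral_add hu2 huv,
      ← integral_add (f := fun x => u x ^ 2 + 2 * (u x * v x)) (hu2.add huv) hv2]
    exact integral_congr_ae (.of_forall fun x => by ring)
  have cs := (le_abs_self _).trans (abs_integral_mul_le_sqrt_mul_sqrt hu hv)
  have hA := Real.sq_sqrt (integral_nonneg fun x => sq_nonneg (u x) : 0 ≤ ∫ x, u x ^ 2 ∂μ)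
  have hB := Real.sq_sqrt (integral_nonneg fun x => sq_nonneg (v x) : 0 ≤ ∫ x, v x ^ 2 ∂μ)
  refine Real.sqrt_le_iff.mpr ⟨by positivity, ?_⟩
  rw [expand]
  nlinarith

end L2

theorem ContinuousOn.memLp_two_Ioc {u : ℝ → ℝ} {a b : ℝ} (hu : ContinuousOn u (Icc a b)) :
    MemLp u 2 (volume.restrict (Ioc a b)) :=
  (memLp_two_iff_integrable_sq (hu.integrableOn_Icc.mono_set Ioc_subset_Icc_self).1).mpr
    ((hu.pow 2).integrableOn_Icc.mono_set Ioc_subset_Icc_self)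

theorem sq_intervalIntegral_le {G : ℝ → ℝ} {s t : ℝ} (hG : MemLp G 2 (volume.restrict (Ι s t))) :
    (∫ x in s..t, G x) ^ 2 ≤ |t - s| * ∫ x in Ι s t, G x ^ 2 := by
  have : IsFiniteMeasure (volume.restrict (Ι s t)) :=
    isFiniteMeasure_restrict.mpr (by simp [Real.volume_uIoc])
  have cs := abs_integral_mul_le_sqrt_mul_sqrt hG (memLp_const (1 : ℝ))
  simp only [mul_one, one_pow, integral_const, smul_eq_mul, measureReal_def,
    Measure.restrict_apply_univ, Real.volume_uIoc, ENNReal.toReal_ofReal (abs_nonneg _)] at cs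
  rw [← sq_abs, intervalIntegral.abs_integral_eq_abs_integral_uIoc]
  calc |∫ x in Ι s t, G x| ^ 2 ≤ (√(∫ x in Ι s t, G x ^ 2) * √|t - s|) ^ 2 := by gcongr
    _ = |t - s| * ∫ x in Ι s t, G x ^ 2 := by
      rw [mul_pow, Real.sq_sqrt (integral_nonneg fun x => sq_nonneg _),
        Real.sq_sqrt (abs_nonneg _), mul_comm]

section Primitive

variable {F F' : ℝ → ℝ} {a b : ℝ}

theorem sub_eq_intervalIntegral_of_eq_add_integral (hF' : IntegrableOn F' (Icc a b))
    (hF : ∀ x ∈ Icc a b, F x = F a + ∫ u in Ioc a x, F' u) {s t : ℝ} (hs : s ∈ Icc a b)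
    (ht : t ∈ Icc a b) : F t - F s = ∫ u in s..t, F' u := by
  have hI : ∀ x ∈ Icc a b, IntervalIntegrable F' volume a x := fun x hx =>
    (hF'.mono_set (by rw [uIcc_of_le hx.1]; exact Icc_subset_Icc_right hx.2)).intervalIntegrable
  rw [hF t ht, hF s hs, ← intervalIntegral.integral_of_le ht.1,
    ← intervalIntegral.integral_of_le hs.1, add_sub_add_left_eq_sub,
    intervalIntegral.integral_interval_sub_left (hI t ht) (hI s hs)]

theorem continuousOn_of_eq_add_integral (hF' : IntegrableOn F' (Icc a b))
    (hF : ∀ x ∈ Icc a b, F x = F a + ∫ u in Ioc a x, F' u) : ContinuousOn F (Icc a b) :=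
  (continuousOn_const.add (intervalIntegral.continuousOn_primitive hF')).congr hF

end Primitive

section Affine

variable {a b σ c d : ℝ}

theorem integral_comp_mul_add_le {F : ℝ → ℝ} (hσ : 0 < σ) (hab : a ≤ b)
    (hF : IntegrableOn F (Icc a b)) (hF0 : ∀ x ∈ Icc a b, 0 ≤ F x) (ha : a ≤ σ * a + c)
    (hb : σ * b + c ≤ b) :
    ∫ t in a..b, F (σ * t + c) ≤ σ⁻¹ * ∫ t in a..b, F t := by
  rw [intervalIntegral.integral_comp_mul_add F hσ.ne' c, smul_eq_mul]
  gcongr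
  exact intervalIntegral.integral_mono_interval ha (by gcongr) hb
    ((ae_restrict_mem measurableSet_Ioc).mono fun x hx => hF0 x (Ioc_subset_Icc_self hx))
    (hF.mono_set (uIcc_of_le hab).subset).intervalIntegrable

theorem integral_sub_comp_mul_add_le {Φ : ℝ → ℝ} (hσ : 0 < σ) (hab : a ≤ b) (hcd : c ≤ d)
    (hΦ : MonotoneOn Φ (Icc a b)) (hΦc : ContinuousOn Φ (Icc a b)) (ha : σ * a + c = a)
    (hb : σ * b + d = b) :
    ∫ t in a..b, (Φ (σ * t + d) - Φ (σ * t + c)) ≤ (d - c) / σ * (Φ b - Φ a) := by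
  have hσab : σ * a ≤ σ * b := by gcongr
  have hI : ∀ x ∈ Icc a b, ∀ y ∈ Icc a b, IntervalIntegrable Φ volume x y := fun x hx y hy =>
    (hΦc.mono (uIcc_subset_Icc hx hy)).intervalIntegrable
  have hmaps : ∀ e, σ * a + e ∈ Icc a b → σ * b + e ∈ Icc a b →
      IntervalIntegrable (fun t => Φ (σ * t + e)) volume a b := fun e he₁ he₂ =>
    (hΦc.comp (by fun_prop) fun t ht => by
      rw [uIcc_of_le hab] at ht
      exact ⟨by nlinarith [he₁.1, ht.1], by nlinarith [he₂.2, ht.2]⟩).intervalIntegrable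
  have hp : σ * a + d ∈ Icc a b := ⟨by linarith, by linarith⟩
  have hq : σ * b + c ∈ Icc a b := ⟨by linarith, by linarith⟩
  have ha' : a ∈ Icc a b := left_mem_Icc.mpr hab
  have hb' : b ∈ Icc a b := right_mem_Icc.mpr hab
  rw [intervalIntegral.integral_sub (hmaps d hp (by rwa [hb])) (hmaps c (by rwa [ha]) hq),
    intervalIntegral.integral_comp_mul_add Φ hσ.ne' d,
    intervalIntegral.integral_comp_mul_add Φ hσ.ne' c, ha, hb, smul_eq_mul, smul_eq_mul, ← mul_sub]
  have hsplit : (∫ x in σ * a + d..b, Φ x) - ∫ x in a..σ * b + c, Φ x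
      = (∫ x in σ * b + c..b, Φ x) - ∫ x in a..σ * a + d, Φ x := by
    have h₁ := intervalIntegral.integral_add_adjacent_intervals (hI a ha' _ hp) (hI _ hp b hb')
    have h₂ := intervalIntegral.integral_add_adjacent_intervals (hI a ha' _ hq) (hI _ hq b hb')
    linarith
  have hupper : ∫ x in σ * b + c..b, Φ x ≤ ∫ x in σ * b + c..b, Φ b :=
    intervalIntegral.integral_mono_on hq.2 (hI _ hq b hb') intervalIntegrable_const
      fun x hx => hΦ ⟨hq.1.trans hx.1, hx.2⟩ hb' hx.2
  have hlower : ∫ x in a..σ * a + d, Φ a ≤ ∫ x in a..σ * a + d, Φ x :=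
    intervalIntegral.integral_mono_on hp.1 intervalIntegrable_const (hI a ha' _ hp)
      fun x hx => hΦ ha' ⟨hx.1, hx.2.trans hp.2⟩ hx.1
  -- only the end pieces of length `d - c` survive, and `Φ` is monotone on them
  rw [hsplit, div_eq_inv_mul, mul_assoc]
  gcongr
  rw [intervalIntegral.integral_const, smul_eq_mul, show b - (σ * b + c) = d - c by linarith]
    at hupper
  rw [intervalIntegral.integral_const, smul_eq_mul, show σ * a + d - a = d - c by linarith]
    at hlower
  linarith

end Affine

section Window

variable {f f' f'' : ℝ → ℝ} {a b r : ℝ}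

theorem sq_sub_slope_le (hf'' : IntegrableOn f'' (Icc a b))
    (hsq : IntegrableOn (fun t => f'' t ^ 2) (Icc a b))
    (hf' : ∀ t ∈ Icc a b, f' t = f' a + ∫ s in Ioc a t, f'' s)
    (hf : ∀ t ∈ Icc a b, f t = f a + ∫ s in Ioc a t, f' s)
    {y z t : ℝ} (hay : a ≤ y) (hyz : y < z) (hzb : z ≤ b) (ht : t ∈ Icc y z) :
    (f' t - (f z - f y) / (z - y)) ^ 2 ≤ (z - y) * ∫ s in y..z, f'' s ^ 2 := by
  have hyzab : Icc y z ⊆ Icc a b := Icc_subset_Icc hay hzb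
  have hf'c := continuousOn_of_eq_add_integral hf'' hf'
  obtain ⟨ξ, hξ, hξ_avg⟩ := exists_eq_interval_average hyz.ne
    (hf'c.mono (by rwa [uIcc_of_le hyz.le]))
  rw [uIoo_of_le hyz.le] at hξ
  have hslope : (f z - f y) / (z - y) = f' ξ := by
    rw [hξ_avg, interval_average_eq_div, sub_eq_intervalIntegral_of_eq_add_integral
      hf'c.integrableOn_Icc hf (hyzab (left_mem_Icc.mpr hyz.le)) (hyzab (right_mem_Icc.mpr hyz.le))]
  have hwin : Ι ξ t ⊆ Ioc y z := by
    rw [← uIoc_of_le hyz.le]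
    exact uIoc_subset_uIoc_of_uIcc_subset_uIcc (uIcc_subset_uIcc
      (by rw [uIcc_of_le hyz.le]; exact Ioo_subset_Icc_self hξ) (by rwa [uIcc_of_le hyz.le]))
  have hwin' : Ι ξ t ⊆ Icc a b := hwin.trans (Ioc_subset_Icc_self.trans hyzab)
  have hmem : MemLp f'' 2 (volume.restrict (Ι ξ t)) :=
    (memLp_two_iff_integrable_sq (hf''.mono_set hwin').1).mpr (hsq.mono_set hwin')
  rw [hslope, sub_eq_intervalIntegral_of_eq_add_integral hf'' hf' (hyzab (Ioo_subset_Icc_self hξ))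
    (hyzab ht), intervalIntegral.integral_of_le hyz.le]
  calc (∫ s in ξ..t, f'' s) ^ 2 ≤ |t - ξ| * ∫ s in Ι ξ t, f'' s ^ 2 := sq_intervalIntegral_le hmem
    _ ≤ (z - y) * ∫ s in Ioc y z, f'' s ^ 2 := by
      gcongr
      · exact abs_sub_le_iff.mpr ⟨by linarith [hξ.1, ht.2], by linarith [hξ.2, ht.1]⟩
      · exact .of_forall fun s => sq_nonneg _
      · exact hsq.mono_set (Ioc_subset_Icc_self.trans hyzab)

/-- The slope of `f` over `[(1 - r) t + r a, (1 - r) t + r b]`, the image of `[a, b]` under the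
homothety of ratio `r` centred at `t`. -/
noncomputable def windowSlope (f : ℝ → ℝ) (a b r t : ℝ) : ℝ :=
  (f ((1 - r) * t + r * b) - f ((1 - r) * t + r * a)) / (r * (b - a))

theorem homothety_mem_Icc (hr0 : 0 ≤ r) (hr1 : r ≤ 1) {t x : ℝ} (ht : t ∈ Icc a b)
    (hx : x ∈ Icc a b) : (1 - r) * t + r * x ∈ Icc a b := by
  simpa only [smul_eq_mul] using convex_Icc a b ht hx (by linarith) hr0 (by ring)

theorem continuousOn_windowSlope (hf : ContinuousOn f (Icc a b)) (hr0 : 0 ≤ r) (hr1 : r ≤ 1) :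
    ContinuousOn (windowSlope f a b r) (Icc a b) := by
  refine ContinuousOn.div_const (ContinuousOn.sub ?_ ?_) _ <;>
  exact hf.comp (by fun_prop) fun t ht => homothety_mem_Icc hr0 hr1 ht (by grind)

theorem integral_sq_sub_windowSlope_le (hf'' : IntegrableOn f'' (Icc a b))
    (hsq : IntegrableOn (fun t => f'' t ^ 2) (Icc a b))
    (hf' : ∀ t ∈ Icc a b, f' t = f' a + ∫ s in Ioc a t, f'' s)
    (hf : ∀ t ∈ Icc a b, f t = f a + ∫ s in Ioc a t, f' s)
    (hab : a < b) (hr0 : 0 < r) (hr1 : r < 1) :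
    ∫ t in a..b, (f' t - windowSlope f a b r t) ^ 2
      ≤ (r * (b - a)) ^ 2 / (1 - r) * ∫ t in a..b, f'' t ^ 2 := by
  set Φ : ℝ → ℝ := fun x => ∫ s in a..x, f'' s ^ 2
  have hsq' : ∀ x ∈ Icc a b, IntervalIntegrable (fun s => f'' s ^ 2) volume a x := fun x hx =>
    (hsq.mono_set (by rw [uIcc_of_le hx.1]; exact Icc_subset_Icc_right hx.2)).intervalIntegrable
  have hΦc : ContinuousOn Φ (Icc a b) := by
    simpa only [uIcc_of_le hab.le] using
      intervalIntegral.continuousOn_primitive_interval (hsq.mono_set (uIcc_of_le hab.le).subset)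
  have hΦm : MonotoneOn Φ (Icc a b) := fun x hx y hy hxy =>
    intervalIntegral.integral_mono_interval le_rfl hx.1 hxy
      (.of_forall fun s => sq_nonneg (f'' s)) (hsq' y hy)
  have hmem : ∀ t ∈ Icc a b, ∀ x ∈ Icc a b, (1 - r) * t + r * x ∈ Icc a b :=
    fun t ht x hx => homothety_mem_Icc hr0.le hr1.le ht hx
  have ha : a ∈ Icc a b := left_mem_Icc.mpr hab.le
  have hb : b ∈ Icc a b := right_mem_Icc.mpr hab.le
  have hpointwise : ∀ t ∈ Icc a b, (f' t - windowSlope f a b r t) ^ 2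
      ≤ r * (b - a) * (Φ ((1 - r) * t + r * b) - Φ ((1 - r) * t + r * a)) := by
    intro t ht
    have hwin := sq_sub_slope_le hf'' hsq hf' hf (hmem t ht a ha).1
      (by nlinarith : (1 - r) * t + r * a < (1 - r) * t + r * b) (hmem t ht b hb).2
      (t := t) ⟨by nlinarith [ht.1], by nlinarith [ht.2]⟩
    rw [← intervalIntegral.integral_interval_sub_left (hsq' _ (hmem t ht b hb))
      (hsq' _ (hmem t ht a ha)),
      show (1 - r) * t + r * b - ((1 - r) * t + r * a) = r * (b - a) by ring] at hwin
    exact hwin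
  have hf'c := continuousOn_of_eq_add_integral hf'' hf'
  have hfc := continuousOn_of_eq_add_integral (hf'c.integrableOn_Icc) hf
  have hshift := integral_sub_comp_mul_add_le (by linarith : 0 < 1 - r) hab.le
    (by nlinarith : r * a ≤ r * b) hΦm hΦc (by ring) (by ring)
  calc ∫ t in a..b, (f' t - windowSlope f a b r t) ^ 2
      ≤ ∫ t in a..b, r * (b - a) * (Φ ((1 - r) * t + r * b) - Φ ((1 - r) * t + r * a)) := by
        refine intervalIntegral.integral_mono_on hab.le ?_ ?_ hpointwise
        · exact ((hf'c.sub (continuousOn_windowSlope hfc hr0.le hr1.le)).pow 2)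
            |>.intervalIntegrable_of_Icc hab.le
        · exact (continuousOn_const.mul ((hΦc.comp (by fun_prop) fun t ht => hmem t ht b hb).sub
            (hΦc.comp (by fun_prop) fun t ht => hmem t ht a ha))).intervalIntegrable_of_Icc hab.le
    _ ≤ r * (b - a) * ((r * b - r * a) / (1 - r) * (Φ b - Φ a)) := by
        rw [intervalIntegral.integral_const_mul]
        gcongr
    _ = (r * (b - a)) ^ 2 / (1 - r) * ∫ t in a..b, f'' t ^ 2 := by
        simp only [Φ, intervalIntegral.integral_same, sub_zero]
        ring

theorem integral_sq_windowSlope_le (hf : ContinuousOn f (Icc a b)) (hab : a < b) (hr0 : 0 < r)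
    (hr1 : r < 1) :
    ∫ t in a..b, windowSlope f a b r t ^ 2
      ≤ 4 / ((r * (b - a)) ^ 2 * (1 - r)) * ∫ t in a..b, f t ^ 2 := by
  have hmem : ∀ x ∈ Icc a b, ∀ t ∈ Icc a b, (1 - r) * t + r * x ∈ Icc a b :=
    fun x hx t ht => homothety_mem_Icc hr0.le hr1.le ht hx
  have ha : a ∈ Icc a b := left_mem_Icc.mpr hab.le
  have hb : b ∈ Icc a b := right_mem_Icc.mpr hab.le
  have hcomp : ∀ x ∈ Icc a b,
      IntervalIntegrable (fun t => f ((1 - r) * t + r * x) ^ 2) volume a b := fun x hx =>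
    ((hf.comp (by fun_prop) (hmem x hx)).pow 2).intervalIntegrable_of_Icc hab.le
  have hshift : ∀ x ∈ Icc a b,
      ∫ t in a..b, f ((1 - r) * t + r * x) ^ 2 ≤ (1 - r)⁻¹ * ∫ t in a..b, f t ^ 2 :=
    fun x hx => integral_comp_mul_add_le (F := fun x => f x ^ 2) (by linarith) hab.le
      (hf.pow 2).integrableOn_Icc (fun _ _ => sq_nonneg _) (by nlinarith [hx.1])
      (by nlinarith [hx.2])
  have hpointwise : ∀ t ∈ Icc a b, windowSlope f a b r t ^ 2
      ≤ 2 / (r * (b - a)) ^ 2 * (f ((1 - r) * t + r * b) ^ 2 + f ((1 - r) * t + r * a) ^ 2) := by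
    intro t _
    rw [windowSlope, div_pow, div_mul_eq_mul_div]
    gcongr
    nlinarith [sq_nonneg (f ((1 - r) * t + r * b) + f ((1 - r) * t + r * a))]
  calc ∫ t in a..b, windowSlope f a b r t ^ 2
      ≤ ∫ t in a..b,
          2 / (r * (b - a)) ^ 2 * (f ((1 - r) * t + r * b) ^ 2 + f ((1 - r) * t + r * a) ^ 2) :=
        intervalIntegral.integral_mono_on hab.le
          (((continuousOn_windowSlope hf hr0.le hr1.le).pow 2).intervalIntegrable_of_Icc hab.le)
          (((hcomp b hb).add (hcomp a ha)).const_mul _) hpointwise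
    _ ≤ 2 / (r * (b - a)) ^ 2 * ((1 - r)⁻¹ * (∫ t in a..b, f t ^ 2)
          + (1 - r)⁻¹ * ∫ t in a..b, f t ^ 2) := by
        rw [intervalIntegral.integral_const_mul,
          intervalIntegral.integral_add (hcomp b hb) (hcomp a ha)]
        exact mul_le_mul_of_nonneg_left (add_le_add (hshift b hb) (hshift a ha)) (by positivity)
    _ = 4 / ((r * (b - a)) ^ 2 * (1 - r)) * ∫ t in a..b, f t ^ 2 := by
        rw [div_mul_eq_div_div]
        ring

theorem sqrt_integral_sq_deriv_le (hf'' : IntegrableOn f'' (Icc a b))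
    (hsq : IntegrableOn (fun t => f'' t ^ 2) (Icc a b))
    (hf' : ∀ t ∈ Icc a b, f' t = f' a + ∫ s in Ioc a t, f'' s)
    (hf : ∀ t ∈ Icc a b, f t = f a + ∫ s in Ioc a t, f' s)
    (hab : a < b) (hr0 : 0 < r) (hr1 : r < 1) :
    √(∫ t in Ioc a b, f' t ^ 2)
      ≤ √((r * (b - a)) ^ 2 / (1 - r) * ∫ t in Ioc a b, f'' t ^ 2)
        + √(4 / ((r * (b - a)) ^ 2 * (1 - r)) * ∫ t in Ioc a b, f t ^ 2) := by
  have hf'c := continuousOn_of_eq_add_integral hf'' hf'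
  have hfc := continuousOn_of_eq_add_integral hf'c.integrableOn_Icc hf
  have hslope := continuousOn_windowSlope hfc hr0.le hr1.le
  have hsplit := sqrt_integral_add_sq_le (hf'c.sub hslope).memLp_two_Ioc hslope.memLp_two_Ioc
  simp only [Pi.sub_apply, sub_add_cancel] at hsplit
  refine hsplit.trans (add_le_add (Real.sqrt_le_sqrt ?_) (Real.sqrt_le_sqrt ?_))
  · simpa only [intervalIntegral.integral_of_le hab.le] using
      integral_sq_sub_windowSlope_le hf'' hsq hf' hf hab hr0 hr1
  · simpa only [intervalIntegral.integral_of_le hab.le] using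
      integral_sq_windowSlope_le hfc hab hr0 hr1

end Window

theorem four_div_sq_mul_le {d σ : ℝ} (hd : 0 < d) (hσ : d / (d + 1) ≤ σ) :
    4 / ((d / (d + 1)) ^ 2 * σ) ≤ (2 * (1 + 2 / d) ^ 2) ^ 2 := by
  have hh : 0 < d / (d + 1) := by positivity
  calc 4 / ((d / (d + 1)) ^ 2 * σ) ≤ 4 / ((d / (d + 1)) ^ 2 * (d / (d + 1))) := by gcongr
    _ = 4 * (1 + 1 / d) ^ 3 := by field_simp
    _ ≤ 4 * (1 + 2 / d) ^ 3 := by gcongr; norm_num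
    _ ≤ 4 * (1 + 2 / d) ^ 4 := by
        gcongr
        · exact le_add_of_nonneg_right (by positivity)
        · norm_num
    _ = (2 * (1 + 2 / d) ^ 2) ^ 2 := by ring

theorem div_add_one_le_one_sub {d L : ℝ} (hd : 0 < d) (hL : d ≤ L) :
    d / (d + 1) ≤ 1 - d / (d + 1) / L := by
  have hL0 : 0 < L := hd.trans_le hL
  calc d / (d + 1) = 1 - d / (d + 1) / d := by field_simp; ring
    _ ≤ 1 - d / (d + 1) / L := by gcongr

/-- **Uniform first-derivative bound** (from the proof of Proposition 2.1(ii)):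
on an interval `[a, b]` of length at least `d_* > 0`, every `f` with absolutely
continuous derivative `f'` and second derivative `f'' ∈ L²(a,b)` satisfies
`‖f'‖_{L²} ≤ ‖f''‖_{L²} + 2 (1 + 2/d_*)² ‖f‖_{L²}`. -/
theorem stmt_0 (dstar a b : ℝ) (hdstar : 0 < dstar) (hab : dstar ≤ b - a)
    (f f' f'' : ℝ → ℝ)
    (hint : IntegrableOn f'' (Icc a b) volume)
    (hsq : IntegrableOn (fun t => f'' t ^ 2) (Icc a b) volume)
    (hftc' : ∀ t ∈ Icc a b, f' t = f' a + ∫ s in Ioc a t, f'' s)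
    (hftc : ∀ t ∈ Icc a b, f t = f a + ∫ s in Ioc a t, f' s) :
    Real.sqrt (∫ t in Ioc a b, f' t ^ 2) ≤
      Real.sqrt (∫ t in Ioc a b, f'' t ^ 2) +
        2 * (1 + 2 / dstar) ^ 2 * Real.sqrt (∫ t in Ioc a b, f t ^ 2) := by
  -- `h` solves `h = 1 - h / dstar`, so the contraction factor `1 - h / (b - a)` is at least `h`
  set h := dstar / (dstar + 1)
  have hh0 : 0 < h := by positivity
  have hh1 : h < 1 := (div_lt_one (by linarith)).mpr (by linarith)
  have hhL : h < b - a := ((div_lt_iff₀ (by linarith)).mpr (by nlinarith)).trans_le hab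
  have hrh : h / (b - a) * (b - a) = h := div_mul_cancel₀ h (by linarith)
  have hσ : h ≤ 1 - h / (b - a) := div_add_one_le_one_sub hdstar hab
  have key := sqrt_integral_sq_deriv_le hint hsq hftc' hftc (by linarith)
    (div_pos hh0 (by linarith)) ((div_lt_one (by linarith)).mpr hhL)
  rw [hrh] at key
  refine key.trans (add_le_add (Real.sqrt_le_sqrt ?_) ?_)
  · refine mul_le_of_le_one_left (integral_nonneg fun t => sq_nonneg _) ?_
    exact div_le_one_of_le₀ (by nlinarith) (hh0.le.trans hσ)
  · rw [← Real.sqrt_sq (by positivity : 0 ≤ 2 * (1 + 2 / dstar) ^ 2), ← Real.sqrt_mul (sq_nonneg _)]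
    exact Real.sqrt_le_sqrt (mul_le_mul_of_nonneg_right (four_div_sq_mul_le hdstar hσ)
      (integral_nonneg fun t => sq_nonneg _))
end

section
/- The following are equivalent: (a) d_* := inf_k d_k > 0; (b) there exists a constant C > 0 such that every function f : [0,∞) → ℝ that is piecewise H² with respect to X and satisfies Σ_k (‖f‖²_{L²(Δ_k)} + ‖f''‖²_{L²(Δ_k)}) < ∞ also satisfies Σ_k ‖f'‖²_{L²(Δ_k)} ≤ C · Σ_k (‖f‖²_{L²(Δ_k)} + ‖f''‖²_{L²(Δ_k)}). In other words, the embedding of the broken Sobolev space W^{2,2}(ℝ₊∖X) into W^{1,2}(ℝ₊∖X) holds and is continuous if and only if d_* > 0. -/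
open MeasureTheory Set Filter

/-- A function that is piecewise `H²` with respect to the partition points
`x 0 < x 1 < x 2 < ⋯` of `[0,∞)`: on each interval `Δ_{k+1} = [x k, x (k+1)]` it is
continuously differentiable with absolutely continuous derivative, encoded via
the fundamental theorem of calculus using right-limit values `fr k = f(x k +)`
and `dr k = f'(x k +)`. -/
structure PiecewiseH2 (x : ℕ → ℝ) where
  f : ℝ → ℝ
  f' : ℝ → ℝ
  f'' : ℝ → ℝ
  fr : ℕ → ℝ
  dr : ℕ → ℝ
  int_dd : ∀ k, IntegrableOn f'' (Icc (x k) (x (k + 1))) volume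
  int_d : ∀ k, IntegrableOn f' (Icc (x k) (x (k + 1))) volume
  ftc_d : ∀ k, ∀ t ∈ Ioo (x k) (x (k + 1)), f' t = dr k + ∫ s in Ioc (x k) t, f'' s
  ftc : ∀ k, ∀ t ∈ Ioo (x k) (x (k + 1)), f t = fr k + ∫ s in Ioc (x k) t, f' s

/-!
If every gap is at least `ε`, cut each `Δ_k` into pieces of length `l ∈ [ε/2, ε]`. On a piece
`[a, b]` of length `L`, pick `u` in the first and `v` in the last third of it where `f²` is at
most its mean over that third. For every `t`, `f'(t)` differs from the slope
`(f v - f u) / (v - u)` by at most `∫ₐᵇ |f''|`, and the slope is controlled by `∫ₐᵇ f²` because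
`v - u ≥ L / 3`; with Cauchy–Schwarz this gives `∫ₐᵇ f'² ≤ 216 L⁻² ∫ₐᵇ f² + 2 L² ∫ₐᵇ f''²`.
Summing over the pieces gives the embedding with `C = 864 ε⁻² + 2 ε²`.

Conversely, the ramp equal to `t - x k` on `(x k, x (k + 1))` and to `0` elsewhere has
`∫ f'² = d` and `∫ f² = d³ / 3` for `d = x (k + 1) - x k`, so the embedding forces `d² ≥ 3 / C`.
-/

theorem sq_setIntegral_le_measureReal_mul {α : Type*} [MeasurableSpace α] {μ : Measure α}
    {s : Set α} {g : α → ℝ} (hs : μ s ≠ ⊤) (hg : IntegrableOn g s μ)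
    (hg2 : IntegrableOn (fun t => g t ^ 2) s μ) :
    (∫ t in s, g t ∂μ) ^ 2 ≤ μ.real s * ∫ t in s, g t ^ 2 ∂μ := by
  rcases eq_or_ne (μ s) 0 with h0 | h0
  · simp [Measure.restrict_eq_zero.2 h0]
  have hpos : 0 < μ.real s := ENNReal.toReal_pos h0 hs
  have jensen := (even_two.convexOn_pow (𝕜 := ℝ)).map_set_average_le
    (continuous_pow 2).continuousOn isClosed_univ h0 hs (by simp) hg hg2
  simp only [setAverage_eq, smul_eq_mul] at jensen
  field_simp at jensen
  nlinarith

theorem exists_nat_mul_eq_of_le {ε L : ℝ} (hε : 0 < ε) (hεL : ε ≤ L) :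
    ∃ N : ℕ, ∃ l : ℝ, ε / 2 ≤ l ∧ l ≤ ε ∧ N * l = L := by
  have h1 : 1 ≤ L / ε := (one_le_div hε).2 hεL
  have hN : (0 : ℝ) < ⌈L / ε⌉₊ := by exact_mod_cast Nat.ceil_pos.2 (by linarith)
  refine ⟨⌈L / ε⌉₊, L / ⌈L / ε⌉₊, ?_, ?_, by field_simp⟩
  · have := Nat.ceil_lt_add_one (by positivity : 0 ≤ L / ε)
    rw [le_div_iff₀ hN]
    calc ε / 2 * ⌈L / ε⌉₊ ≤ ε / 2 * (2 * (L / ε)) := by gcongr; linarith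
      _ = L := by field_simp
  · rw [div_le_iff₀ hN]
    calc L = ε * (L / ε) := by field_simp
      _ ≤ ε * ⌈L / ε⌉₊ := by gcongr; exact Nat.le_ceil _

section Interval

variable {f f' f'' g : ℝ → ℝ} {a b : ℝ}

theorem sq_intervalIntegral_abs_le (hab : a ≤ b) (hg : IntegrableOn g (Icc a b))
    (hg2 : IntegrableOn (fun t => g t ^ 2) (Icc a b)) :
    (∫ t in a..b, |g t|) ^ 2 ≤ (b - a) * ∫ t in a..b, g t ^ 2 := by
  have h := sq_setIntegral_le_measureReal_mul (s := Ioc a b) (μ := volume) measure_Ioc_lt_top.ne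
    (hg.mono_set Ioc_subset_Icc_self).abs (by simpa using hg2.mono_set Ioc_subset_Icc_self)
  simpa [intervalIntegral.integral_of_le hab, Real.volume_real_Ioc_of_le hab] using h

theorem abs_intervalIntegral_le_of_mem_Icc {s t : ℝ} (hg : IntegrableOn g (Icc a b))
    (hs : s ∈ Icc a b) (ht : t ∈ Icc a b) :
    |∫ r in s..t, g r| ≤ ∫ r in a..b, |g r| := by
  rw [intervalIntegral.integral_of_le (hs.1.trans hs.2)]
  calc |∫ r in s..t, g r| ≤ ∫ r in uIoc s t, |g r| := by
        simpa only [Real.norm_eq_abs] using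
          intervalIntegral.norm_integral_le_integral_norm_uIoc (f := g) (μ := volume)
    _ ≤ ∫ r in Ioc a b, |g r| :=
        setIntegral_mono_set (hg.mono_set Ioc_subset_Icc_self).abs
          (Eventually.of_forall fun _ => abs_nonneg _)
          (Ioc_subset_Ioc (le_min hs.1 ht.1) (max_le hs.2 ht.2)).eventuallyLE

theorem exists_mul_sq_le_intervalIntegral (hab : a ≤ b) (hf : ContinuousOn f (Icc a b)) :
    ∃ u ∈ Icc a b, (b - a) * f u ^ 2 ≤ ∫ t in a..b, f t ^ 2 := by
  obtain ⟨u, hu, hmin⟩ := isCompact_Icc.exists_isMinOn (nonempty_Icc.2 hab) (hf.pow 2)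
  refine ⟨u, hu, ?_⟩
  simpa using intervalIntegral.integral_mono_on hab (intervalIntegrable_const (μ := volume))
    ((hf.pow 2).intervalIntegrable_of_Icc hab) hmin

theorem exists_sq_slope_le (hab : a < b) (hf : ContinuousOn f (Icc a b)) :
    ∃ u ∈ Icc a b, ∃ v ∈ Icc a b, u < v ∧
      (|f v - f u| / (v - u)) ^ 2 ≤ 108 / (b - a) ^ 3 * ∫ t in a..b, f t ^ 2 := by
  set L := b - a
  have hL0 : 0 < L := sub_pos.2 hab
  set A := ∫ s in a..b, f s ^ 2
  have hA_mono : ∀ c d, a ≤ c → c ≤ d → d ≤ b → ∫ s in c..d, f s ^ 2 ≤ A := fun c d hac hcd hdb =>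
    intervalIntegral.integral_mono_interval hac hcd hdb
      (Eventually.of_forall fun _ => sq_nonneg _) ((hf.pow 2).intervalIntegrable_of_Icc hab.le)
  obtain ⟨u, hu, hu2⟩ := exists_mul_sq_le_intervalIntegral (a := a) (b := a + L / 3)
    (by linarith) (hf.mono (Icc_subset_Icc le_rfl (by linarith)))
  obtain ⟨v, hv, hv2⟩ := exists_mul_sq_le_intervalIntegral (a := b - L / 3) (b := b)
    (by linarith) (hf.mono (Icc_subset_Icc (by linarith) le_rfl))
  have hfu : L * f u ^ 2 ≤ 3 * A := by
    have := hA_mono a (a + L / 3) le_rfl (by linarith) (by linarith)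
    rw [add_sub_cancel_left] at hu2
    linarith
  have hfv : L * f v ^ 2 ≤ 3 * A := by
    have := hA_mono (b - L / 3) b (by linarith) (by linarith) le_rfl
    rw [sub_sub_cancel] at hv2
    linarith
  have huv : L / 3 ≤ v - u := by linarith [hu.2, hv.1]
  refine ⟨u, Icc_subset_Icc le_rfl (by linarith) hu, v, Icc_subset_Icc (by linarith) le_rfl hv,
    by linarith, ?_⟩
  have hA0 : 0 ≤ A := by nlinarith [sq_nonneg (f u)]
  have hnum : (f v - f u) ^ 2 ≤ 12 * A / L := by
    rw [le_div_iff₀ hL0]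
    nlinarith [sq_nonneg (f u + f v)]
  have hden : (L / 3) ^ 2 ≤ (v - u) ^ 2 := pow_le_pow_left₀ (by positivity) huv 2
  calc (|f v - f u| / (v - u)) ^ 2 = (f v - f u) ^ 2 / (v - u) ^ 2 := by rw [div_pow, sq_abs]
    _ ≤ 12 * A / L / (L / 3) ^ 2 := div_le_div₀ (by positivity) hnum (by positivity) hden
    _ = 108 / L ^ 3 * A := by field_simp; ring

theorem sum_intervalIntegral_add_mul {l : ℝ} {N : ℕ} (hl : 0 ≤ l)
    (hg : IntegrableOn g (Icc a (a + N * l))) :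
    ∑ j ∈ Finset.range N, ∫ t in (a + j * l)..(a + (j + 1) * l), g t =
      ∫ t in a..(a + N * l), g t := by
  have h := intervalIntegral.sum_integral_adjacent_intervals (a := fun j : ℕ => a + j * l)
    (n := N) (f := g) (μ := volume) fun j hj => by
      have hj' : (j : ℝ) + 1 ≤ N := by exact_mod_cast hj
      refine (intervalIntegrable_iff_integrableOn_Icc_of_le ?_).2 (hg.mono_set ?_)
      · push_cast; nlinarith
      · apply Icc_subset_Icc <;> push_cast <;> nlinarith
  simpa using h

def IsPrimitiveOn (f f' : ℝ → ℝ) (s : Set ℝ) : Prop :=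
  ∀ u ∈ s, ∀ v ∈ s, f v - f u = ∫ r in u..v, f' r

namespace IsPrimitiveOn

theorem mono {s t : Set ℝ} (h : IsPrimitiveOn f f' t) (hst : s ⊆ t) : IsPrimitiveOn f f' s :=
  fun u hu v hv => h u (hst hu) v (hst hv)

theorem continuousOn (h : IsPrimitiveOn f f' (Icc a b)) (hf' : IntegrableOn f' (Icc a b)) :
    ContinuousOn f (Icc a b) := by
  rcases (Icc a b).eq_empty_or_nonempty with hempty | hne
  · simp [hempty]
  have hab : a ≤ b := nonempty_Icc.1 hne
  rw [← uIcc_of_le hab] at hf' ⊢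
  refine ((continuousOn_const (c := f a)).add
    (intervalIntegral.continuousOn_primitive_interval hf')).congr fun t ht => ?_
  rw [uIcc_of_le hab] at ht
  have := h a (left_mem_Icc.2 hab) t ht
  simp only [Pi.add_apply]
  linarith

theorem abs_le_slope_add {D t u v : ℝ} (h : IsPrimitiveOn f f' (Icc a b))
    (hf' : IntegrableOn f' (Icc a b)) (hD : ∀ s ∈ Icc a b, |f' s - f' t| ≤ D)
    (hu : u ∈ Icc a b) (hv : v ∈ Icc a b) (huv : u < v) :
    |f' t| ≤ |f v - f u| / (v - u) + D := by
  have hsub : Icc u v ⊆ Icc a b := Icc_subset_Icc hu.1 hv.2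
  have hmean : f v - f u - (v - u) * f' t = ∫ s in u..v, (f' s - f' t) := by
    rw [intervalIntegral.integral_sub
      ((intervalIntegrable_iff_integrableOn_Icc_of_le huv.le).2 (hf'.mono_set hsub))
      intervalIntegrable_const, intervalIntegral.integral_const, h u hu v hv, smul_eq_mul]
  have hmean_le : |f v - f u - (v - u) * f' t| ≤ D * (v - u) := by
    rw [hmean, ← abs_of_pos (sub_pos.2 huv)]
    refine intervalIntegral.norm_integral_le_of_norm_le_const (f := fun s => f' s - f' t)
      fun s hs => ?_
    rw [uIoc_of_le huv.le] at hs
    simpa only [Real.norm_eq_abs] using hD s (hsub (Ioc_subset_Icc_self hs))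
  rw [div_add' _ _ _ (sub_pos.2 huv).ne', le_div_iff₀ (sub_pos.2 huv)]
  have := abs_sub (f v - f u) (f v - f u - (v - u) * f' t)
  rw [sub_sub_cancel, abs_mul, abs_of_pos (sub_pos.2 huv)] at this
  linarith

theorem sq_le {D t : ℝ} (h : IsPrimitiveOn f f' (Icc a b)) (hab : a < b)
    (hf' : ContinuousOn f' (Icc a b)) (hD : ∀ s ∈ Icc a b, |f' s - f' t| ≤ D) :
    f' t ^ 2 ≤ 216 / (b - a) ^ 3 * (∫ s in a..b, f s ^ 2) + 2 * D ^ 2 := by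
  obtain ⟨u, hu, v, hv, huv, hslope⟩ :=
    exists_sq_slope_le hab (h.continuousOn hf'.integrableOn_Icc)
  have hpt := h.abs_le_slope_add hf'.integrableOn_Icc hD hu hv huv
  calc f' t ^ 2 = |f' t| ^ 2 := (sq_abs _).symm
    _ ≤ (|f v - f u| / (v - u) + D) ^ 2 := pow_le_pow_left₀ (abs_nonneg _) hpt 2
    _ ≤ 2 * (|f v - f u| / (v - u)) ^ 2 + 2 * D ^ 2 := by
      nlinarith [sq_nonneg (|f v - f u| / (v - u) - D)]
    _ ≤ 216 / (b - a) ^ 3 * (∫ s in a..b, f s ^ 2) + 2 * D ^ 2 := by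
      rw [show 216 / (b - a) ^ 3 * (∫ s in a..b, f s ^ 2) =
        2 * (108 / (b - a) ^ 3 * ∫ s in a..b, f s ^ 2) by ring]
      linarith

theorem integral_sq_le (hf : IsPrimitiveOn f f' (Icc a b)) (hf' : IsPrimitiveOn f' f'' (Icc a b))
    (hab : a < b) (hf'' : IntegrableOn f'' (Icc a b))
    (hf''2 : IntegrableOn (fun t => f'' t ^ 2) (Icc a b)) :
    ∫ t in a..b, f' t ^ 2 ≤
      216 / (b - a) ^ 2 * (∫ t in a..b, f t ^ 2) + 2 * (b - a) ^ 2 * ∫ t in a..b, f'' t ^ 2 := by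
  set D := ∫ r in a..b, |f'' r|
  have hf'c := hf'.continuousOn hf''
  have hpt : ∀ t ∈ Icc a b, f' t ^ 2 ≤ 216 / (b - a) ^ 3 * (∫ s in a..b, f s ^ 2) + 2 * D ^ 2 :=
    fun t ht => hf.sq_le hab hf'c fun s hs => by
      rw [hf' t ht s hs]
      exact abs_intervalIntegral_le_of_mem_Icc hf'' ht hs
  have hD := sq_intervalIntegral_abs_le hab.le hf'' hf''2
  have hL0 : 0 < b - a := sub_pos.2 hab
  calc ∫ t in a..b, f' t ^ 2
      ≤ ∫ _ in a..b, (216 / (b - a) ^ 3 * (∫ s in a..b, f s ^ 2) + 2 * D ^ 2) :=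
        intervalIntegral.integral_mono_on hab.le ((hf'c.pow 2).intervalIntegrable_of_Icc hab.le)
          intervalIntegrable_const hpt
    _ = 216 / (b - a) ^ 2 * (∫ t in a..b, f t ^ 2) + 2 * (b - a) * D ^ 2 := by
        rw [intervalIntegral.integral_const, smul_eq_mul]
        field_simp
    _ ≤ 216 / (b - a) ^ 2 * (∫ t in a..b, f t ^ 2) + 2 * (b - a) ^ 2 * ∫ t in a..b, f'' t ^ 2 := by
        nlinarith

theorem integral_sq_le_of_le_sub {ε : ℝ} (hf : IsPrimitiveOn f f' (Icc a b))
    (hf' : IsPrimitiveOn f' f'' (Icc a b)) (hε : 0 < ε) (hεab : ε ≤ b - a)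
    (hf'' : IntegrableOn f'' (Icc a b)) (hf''2 : IntegrableOn (fun t => f'' t ^ 2) (Icc a b)) :
    ∫ t in a..b, f' t ^ 2 ≤
      864 / ε ^ 2 * (∫ t in a..b, f t ^ 2) + 2 * ε ^ 2 * ∫ t in a..b, f'' t ^ 2 := by
  obtain ⟨N, l, hl1, hl2, hNl⟩ := exists_nat_mul_eq_of_le hε hεab
  obtain rfl : b = a + N * l := by linarith
  have hl : 0 < l := by linarith
  have hpiece : ∀ j ∈ Finset.range N, Icc (a + j * l) (a + (j + 1) * l) ⊆ Icc a (a + N * l) := by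
    intro j hj
    have hj' : (j : ℝ) + 1 ≤ N := by exact_mod_cast Finset.mem_range.1 hj
    apply Icc_subset_Icc <;> nlinarith
  have hf'c := hf'.continuousOn hf''
  have hfc := hf.continuousOn hf'c.integrableOn_Icc
  have hpieces : ∀ j ∈ Finset.range N, ∫ t in (a + j * l)..(a + (j + 1) * l), f' t ^ 2 ≤
      864 / ε ^ 2 * (∫ t in (a + j * l)..(a + (j + 1) * l), f t ^ 2) +
        2 * ε ^ 2 * ∫ t in (a + j * l)..(a + (j + 1) * l), f'' t ^ 2 := by
    intro j hj
    have hjl : a + j * l ≤ a + (j + 1) * l := by nlinarith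
    have key := (hf.mono (hpiece j hj)).integral_sq_le (hf'.mono (hpiece j hj)) (by nlinarith)
      (hf''.mono_set (hpiece j hj)) (hf''2.mono_set (hpiece j hj))
    rw [show a + (j + 1) * l - (a + j * l) = l by ring] at key
    have hA := intervalIntegral.integral_nonneg (μ := volume) hjl fun t _ => sq_nonneg (f t)
    have hS := intervalIntegral.integral_nonneg (μ := volume) hjl fun t _ => sq_nonneg (f'' t)
    have c1 : 216 / l ^ 2 ≤ 864 / ε ^ 2 := by
      rw [div_le_div_iff₀ (by positivity) (by positivity)]
      nlinarith
    have c2 : l ^ 2 ≤ ε ^ 2 := pow_le_pow_left₀ hl.le hl2 2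
    refine key.trans ?_
    gcongr
  calc ∫ t in a..a + N * l, f' t ^ 2
      = ∑ j ∈ Finset.range N, ∫ t in (a + j * l)..(a + (j + 1) * l), f' t ^ 2 :=
        (sum_intervalIntegral_add_mul (g := fun t => f' t ^ 2) hl.le
          (hf'c.pow 2).integrableOn_Icc).symm
    _ ≤ ∑ j ∈ Finset.range N, (864 / ε ^ 2 * (∫ t in (a + j * l)..(a + (j + 1) * l), f t ^ 2) +
          2 * ε ^ 2 * ∫ t in (a + j * l)..(a + (j + 1) * l), f'' t ^ 2) :=
        Finset.sum_le_sum hpieces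
    _ = 864 / ε ^ 2 * (∫ t in a..a + N * l, f t ^ 2) +
          2 * ε ^ 2 * ∫ t in a..a + N * l, f'' t ^ 2 := by
        rw [Finset.sum_add_distrib, ← Finset.mul_sum, ← Finset.mul_sum,
          sum_intervalIntegral_add_mul (g := fun t => f t ^ 2) hl.le (hfc.pow 2).integrableOn_Icc,
          sum_intervalIntegral_add_mul hl.le hf''2]

end IsPrimitiveOn

end Interval

theorem isPrimitiveOn_const_add_primitive {g : ℝ → ℝ} {a b : ℝ} (c : ℝ)
    (hg : IntegrableOn g (Icc a b)) :
    IsPrimitiveOn (fun s => c + ∫ r in a..s, g r) g (Icc a b) := by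
  intro u hu v hv
  have hint : ∀ s ∈ Icc a b, IntervalIntegrable g volume a s := fun s hs =>
    (intervalIntegrable_iff_integrableOn_Icc_of_le hs.1).2
      (hg.mono_set (Icc_subset_Icc le_rfl hs.2))
  rw [add_sub_add_left_eq_sub, intervalIntegral.integral_interval_sub_left (hint v hv) (hint u hu)]

theorem intervalIntegral_eq_setIntegral_Ioo_of_eqOn {f g : ℝ → ℝ} {a b : ℝ} (hab : a ≤ b)
    (h : EqOn f g (Ioo a b)) : ∫ t in a..b, f t = ∫ t in Ioo a b, g t := by
  rw [intervalIntegral.integral_of_le hab, integral_Ioc_eq_integral_Ioo]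
  exact setIntegral_congr_fun measurableSet_Ioo h

theorem Monotone.notMem_Ioo_succ_of_mem {x : ℕ → ℝ} (hx : Monotone x) {j k : ℕ} (hjk : j ≠ k)
    {t : ℝ} (ht : t ∈ Ioo (x j) (x (j + 1))) : t ∉ Ioo (x k) (x (k + 1)) :=
  Set.disjoint_left.1 (hx.pairwise_disjoint_on_Ioo_succ hjk) ht

theorem Monotone.setIntegral_Ioo_succ_indicator_sq {x : ℕ → ℝ} (hx : Monotone x) (g : ℝ → ℝ)
    (j k : ℕ) :
    ∫ t in Ioo (x j) (x (j + 1)), (Ioo (x k) (x (k + 1))).indicator g t ^ 2 =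
      if j = k then ∫ t in Ioo (x k) (x (k + 1)), g t ^ 2 else 0 := by
  split_ifs with hjk
  · subst hjk
    exact setIntegral_congr_fun measurableSet_Ioo fun t ht => by simp [indicator_of_mem ht]
  · exact setIntegral_eq_zero_of_forall_eq_zero fun t ht => by
      simp [indicator_of_notMem (hx.notMem_Ioo_succ_of_mem hjk ht)]

namespace PiecewiseH2

variable {x : ℕ → ℝ}

theorem setIntegral_sq_f'_le (F : PiecewiseH2 x) {ε : ℝ} {k : ℕ} (hε : 0 < ε)
    (hk : ε ≤ x (k + 1) - x k)
    (hF : IntegrableOn (fun t => F.f'' t ^ 2) (Ioo (x k) (x (k + 1)))) :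
    ∫ t in Ioo (x k) (x (k + 1)), F.f' t ^ 2 ≤
      (864 / ε ^ 2 + 2 * ε ^ 2) * ((∫ t in Ioo (x k) (x (k + 1)), F.f t ^ 2) +
        ∫ t in Ioo (x k) (x (k + 1)), F.f'' t ^ 2) := by
  set a := x k
  set b := x (k + 1)
  have hab : a ≤ b := by linarith
  -- `F.f` and `F.f'` are pinned down only on the open interval: work with continuous
  -- representatives on `Icc a b`.
  set g' := fun s => F.dr k + ∫ r in a..s, F.f'' r
  set g := fun s => F.fr k + ∫ r in a..s, g' r
  have hg' : IsPrimitiveOn g' F.f'' (Icc a b) := isPrimitiveOn_const_add_primitive _ (F.int_dd k)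
  have hg'c := hg'.continuousOn (F.int_dd k)
  have hg : IsPrimitiveOn g g' (Icc a b) :=
    isPrimitiveOn_const_add_primitive _ hg'c.integrableOn_Icc
  have hf'g' : EqOn g' F.f' (Ioo a b) := fun t ht => by
    rw [F.ftc_d k t ht, ← intervalIntegral.integral_of_le ht.1.le]
  have hfg : EqOn g F.f (Ioo a b) := fun t ht => by
    rw [F.ftc k t ht]
    show F.fr k + ∫ r in a..t, g' r = _
    rw [intervalIntegral.integral_of_le ht.1.le]
    congr 1
    exact setIntegral_congr_fun measurableSet_Ioc fun r hr => hf'g' ⟨hr.1, hr.2.trans_lt ht.2⟩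
  have key := hg.integral_sq_le_of_le_sub hg' hε hk (F.int_dd k)
    ((integrableOn_Icc_iff_integrableOn_Ioo enorm_ne_top enorm_ne_top).2 hF)
  rw [intervalIntegral_eq_setIntegral_Ioo_of_eqOn hab fun t ht => congrArg (· ^ 2) (hf'g' ht),
    intervalIntegral_eq_setIntegral_Ioo_of_eqOn hab fun t ht => congrArg (· ^ 2) (hfg ht),
    intervalIntegral_eq_setIntegral_Ioo_of_eqOn hab (eqOn_refl _ _)] at key
  have hA := setIntegral_nonneg (μ := volume) measurableSet_Ioo
    fun t (_ : t ∈ Ioo a b) => sq_nonneg (F.f t)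
  have hS := setIntegral_nonneg (μ := volume) measurableSet_Ioo
    fun t (_ : t ∈ Ioo a b) => sq_nonneg (F.f'' t)
  have : 0 ≤ 864 / ε ^ 2 := by positivity
  nlinarith

noncomputable def ramp (hx : Monotone x) (k : ℕ) : PiecewiseH2 x where
  f := (Ioo (x k) (x (k + 1))).indicator fun t => t - x k
  f' := (Ioo (x k) (x (k + 1))).indicator 1
  f'' := 0
  fr := 0
  dr := Pi.single k 1
  int_dd _ := integrableOn_zero
  int_d _ := (integrableOn_const measure_Icc_lt_top.ne).indicator measurableSet_Ioo
  ftc_d j t ht := by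
    rcases eq_or_ne j k with rfl | hjk
    · simp [ht]
    · simp [hx.notMem_Ioo_succ_of_mem hjk ht, hjk]
  ftc j t ht := by
    rcases eq_or_ne j k with rfl | hjk
    · rw [setIntegral_congr_fun measurableSet_Ioc fun r hr =>
        indicator_of_mem (s := Ioo (x j) (x (j + 1))) ⟨hr.1, hr.2.trans_lt ht.2⟩ (1 : ℝ → ℝ)]
      simp [ht, ht.1.le]
    · rw [setIntegral_eq_zero_of_forall_eq_zero fun r hr =>
        indicator_of_notMem (hx.notMem_Ioo_succ_of_mem hjk ⟨hr.1, hr.2.trans_lt ht.2⟩) _]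
      simp [hx.notMem_Ioo_succ_of_mem hjk ht]

@[simp]
theorem ramp_f'' (hx : Monotone x) (k : ℕ) : (ramp hx k).f'' = 0 := rfl

theorem setIntegral_ramp_f_sq (hx : Monotone x) (j k : ℕ) :
    ∫ t in Ioo (x j) (x (j + 1)), (ramp hx k).f t ^ 2 =
      if j = k then (x (k + 1) - x k) ^ 3 / 3 else 0 := by
  rw [ramp, hx.setIntegral_Ioo_succ_indicator_sq, ← integral_Ioc_eq_integral_Ioo,
    ← intervalIntegral.integral_of_le (hx k.le_succ),
    intervalIntegral.integral_comp_sub_right (fun t => t ^ 2)]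
  norm_num

theorem setIntegral_ramp_f'_sq (hx : Monotone x) (j k : ℕ) :
    ∫ t in Ioo (x j) (x (j + 1)), (ramp hx k).f' t ^ 2 =
      if j = k then x (k + 1) - x k else 0 := by
  rw [ramp, hx.setIntegral_Ioo_succ_indicator_sq]
  simp [Real.volume_real_Ioo_of_le (hx k.le_succ)]

end PiecewiseH2

-- `C` is a norm bound for the embedding `W^{2,2}(ℝ₊∖X) ↪ W^{1,2}(ℝ₊∖X)`.
def BrokenSobolevEmbedding (x : ℕ → ℝ) (C : ℝ) : Prop :=
  ∀ F : PiecewiseH2 x,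
    (∀ k, IntegrableOn (fun t => F.f'' t ^ 2) (Ioo (x k) (x (k + 1))) volume) →
    Summable (fun k => (∫ t in Ioo (x k) (x (k + 1)), F.f t ^ 2) +
      ∫ t in Ioo (x k) (x (k + 1)), F.f'' t ^ 2) →
    (Summable (fun k => ∫ t in Ioo (x k) (x (k + 1)), F.f' t ^ 2) ∧
      (∑' k, ∫ t in Ioo (x k) (x (k + 1)), F.f' t ^ 2) ≤
        C * ∑' k, ((∫ t in Ioo (x k) (x (k + 1)), F.f t ^ 2) +
          ∫ t in Ioo (x k) (x (k + 1)), F.f'' t ^ 2))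

theorem brokenSobolevEmbedding_of_le_sub {x : ℕ → ℝ} {ε : ℝ} (hε : 0 < ε)
    (hgap : ∀ k, ε ≤ x (k + 1) - x k) :
    BrokenSobolevEmbedding x (864 / ε ^ 2 + 2 * ε ^ 2) := by
  intro F hF hsum
  have hle := fun k => F.setIntegral_sq_f'_le hε (hgap k) (hF k)
  have hsum' := Summable.of_nonneg_of_le
    (fun k => setIntegral_nonneg measurableSet_Ioo fun t _ => sq_nonneg (F.f' t)) hle
    (hsum.mul_left _)
  exact ⟨hsum', (hsum'.tsum_le_tsum hle (hsum.mul_left _)).trans_eq tsum_mul_left⟩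

theorem BrokenSobolevEmbedding.sqrt_le_sub {x : ℕ → ℝ} {C : ℝ} (h : BrokenSobolevEmbedding x C)
    (hx : StrictMono x) (hC : 0 < C) (k : ℕ) :
    √(3 / C) ≤ x (k + 1) - x k := by
  have hd : 0 < x (k + 1) - x k := sub_pos.2 (hx k.lt_succ_self)
  set F := PiecewiseH2.ramp hx.monotone k
  have hrhs : ∀ j, (∫ t in Ioo (x j) (x (j + 1)), F.f t ^ 2) +
      ∫ t in Ioo (x j) (x (j + 1)), F.f'' t ^ 2 =
        if j = k then (x (k + 1) - x k) ^ 3 / 3 else 0 := fun j => by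
    simp [F, PiecewiseH2.setIntegral_ramp_f_sq]
  have hF := h F fun j => by simp [F]
  simp only [hrhs, F, PiecewiseH2.setIntegral_ramp_f'_sq, tsum_ite_eq] at hF
  obtain ⟨-, hle⟩ := hF (hasSum_ite_eq k _).summable
  calc √(3 / C) ≤ √((x (k + 1) - x k) ^ 2) := by
        gcongr
        rw [div_le_iff₀ hC]
        nlinarith
    _ = x (k + 1) - x k := Real.sqrt_sq hd.le

theorem stmt_1_general (x : ℕ → ℝ) (hmono : StrictMono x) :
    (∃ ε > 0, ∀ k, ε ≤ x (k + 1) - x k) ↔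
      ∃ C > 0, ∀ F : PiecewiseH2 x,
        (∀ k, IntegrableOn (fun t => F.f'' t ^ 2) (Ioo (x k) (x (k + 1))) volume) →
        Summable (fun k => (∫ t in Ioo (x k) (x (k + 1)), F.f t ^ 2) +
          ∫ t in Ioo (x k) (x (k + 1)), F.f'' t ^ 2) →
        (Summable (fun k => ∫ t in Ioo (x k) (x (k + 1)), F.f' t ^ 2) ∧
          (∑' k, ∫ t in Ioo (x k) (x (k + 1)), F.f' t ^ 2) ≤
            C * ∑' k, ((∫ t in Ioo (x k) (x (k + 1)), F.f t ^ 2) +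
              ∫ t in Ioo (x k) (x (k + 1)), F.f'' t ^ 2)) := by
  constructor
  · rintro ⟨ε, hε, hgap⟩
    exact ⟨_, by positivity, brokenSobolevEmbedding_of_le_sub hε hgap⟩
  · rintro ⟨C, hC, hemb⟩
    exact ⟨√(3 / C), by positivity, BrokenSobolevEmbedding.sqrt_le_sub hemb hmono hC⟩

/-- The embedding `W^{2,2}(ℝ₊∖X) ↪ W^{1,2}(ℝ₊∖X)` holds and is continuous
if and only if `d_* = inf_k d_k > 0` (Proposition 2.1(ii)). -/
theorem stmt_1 (x : ℕ → ℝ) (hx0 : x 0 = 0) (hmono : StrictMono x)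
    (hxtop : Tendsto x atTop atTop) :
    (∃ ε > 0, ∀ k, ε ≤ x (k + 1) - x k) ↔
      ∃ C > 0, ∀ F : PiecewiseH2 x,
        (∀ k, IntegrableOn (fun t => F.f'' t ^ 2) (Ioo (x k) (x (k + 1))) volume) →
        Summable (fun k => (∫ t in Ioo (x k) (x (k + 1)), F.f t ^ 2) +
          ∫ t in Ioo (x k) (x (k + 1)), F.f'' t ^ 2) →
        (Summable (fun k => ∫ t in Ioo (x k) (x (k + 1)), F.f' t ^ 2) ∧
          (∑' k, ∫ t in Ioo (x k) (x (k + 1)), F.f' t ^ 2) ≤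
            C * ∑' k, ((∫ t in Ioo (x k) (x (k + 1)), F.f t ^ 2) +
              ∫ t in Ioo (x k) (x (k + 1)), F.f'' t ^ 2)) :=
  stmt_1_general x hmono
end

section
/- Assume d^* < ∞, and suppose the positive parts satisfy sup_k (1/d_k)∫_{Δ_k} q_+(x) dx < ∞ and sup_k (1/β_k)^+ / min{d_k, d_{k+1}} < ∞. If there exists C ≥ 0 such that t_{X,β,q}[f] ≥ −C ∫₀^∞ |f|² dx for all f in the domain of t_{X,β,q}, then there exists a constant C̃ ≥ 0 such that (1/d_k)∫_{Δ_k} q_−(x) dx ≤ C̃ for all k and (1/β_k)^− ≤ C̃ · min{d_k, d_{k+1}} for all k. In particular, these two conditions are necessary for lower semiboundedness whenever q ≤ 0 and all β_k < 0. -/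
open MeasureTheory Set Filter

noncomputable section

/-- A function that is *piecewise `H¹`* with respect to the partition points
`x 0 < x 1 < x 2 < ⋯` of `[0,∞)`: on each interval `Δ_{k+1} = [x k, x (k+1)]` it is
absolutely continuous with derivative `f' ∈ L²`, encoded via the fundamental
theorem of calculus; `fr k = f(x k +)` and `fl (k+1) = f(x (k+1) −)` are the
one-sided limits at the nodes. -/
structure PW1 (x : ℕ → ℝ) where
  f : ℝ → ℝ
  f' : ℝ → ℝ
  fr : ℕ → ℝ
  fl : ℕ → ℝ
  int_d : ∀ k, IntegrableOn f' (Icc (x k) (x (k + 1))) volume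
  sq_d : ∀ k, IntegrableOn (fun t => f' t ^ 2) (Icc (x k) (x (k + 1))) volume
  ftc : ∀ k, ∀ t ∈ Ioo (x k) (x (k + 1)), f t = fr k + ∫ s in Ioc (x k) t, f' s
  fl_eq : ∀ k, fl (k + 1) = fr k + ∫ s in Ioc (x k) (x (k + 1)), f' s

/-- The jump `f(x_{k+1}+) − f(x_{k+1}−)` of a piecewise `H¹` function at the
interior node `x (k+1)` (the paper's node `x_{k+1}`). -/
def PW1.jump {x : ℕ → ℝ} (F : PW1 x) (k : ℕ) : ℝ := F.fr (k + 1) - F.fl (k + 1)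

/-- Membership in the domain of the form `t_{X,β,q}`: `f ∈ L²(0,∞)`,
`∫₀^∞ |f'|² < ∞`, `∫₀^∞ |q| |f|² < ∞` and `Σ_k |f(x_k+) − f(x_k−)|²/|β_k| < ∞`. -/
def MemDom (x : ℕ → ℝ) (q : ℝ → ℝ) (β : ℕ → ℝ) (F : PW1 x) : Prop :=
  IntegrableOn (fun t => F.f t ^ 2) (Ioi 0) volume ∧
  IntegrableOn (fun t => F.f' t ^ 2) (Ioi 0) volume ∧
  IntegrableOn (fun t => |q t| * F.f t ^ 2) (Ioi 0) volume ∧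
  Summable (fun k => F.jump k ^ 2 / |β (k + 1)|)

/-- The value of the quadratic form
`t_{X,β,q}[f] = ∫₀^∞ (|f'|² + q |f|²) dx + Σ_k |f(x_k+) − f(x_k−)|²/β_k`. -/
def formVal (x : ℕ → ℝ) (q : ℝ → ℝ) (β : ℕ → ℝ) (F : PW1 x) : ℝ :=
  (∫ t in Ioi (0 : ℝ), (F.f' t ^ 2 + q t * F.f t ^ 2)) +
    ∑' k, F.jump k ^ 2 / β (k + 1)


/-!
Test the form against the indicator function of a single interval `Δ_{m+1} = [x m, x (m+1)]`.
It lies in the domain, has no derivative, squared norm `d_{m+1}`, and unit jumps exactly at the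
two endpoints, so lower semiboundedness gives
`∫_{Δ_{m+1}} q + 1/β_m + 1/β_{m+1} ≥ -C d_{m+1}`.
The hypotheses bound `∫ q₊` and the positive parts of the `1/β` from above, which turns this into
an upper bound on `∫ q₋ = ∫ q₊ - ∫ q`, and (using the intervals on both sides of `x (k+1)`) on
`(1/β_{k+1})⁻` by a multiple of `min(d_{k+1}, d_{k+2})`.
-/

lemma integral_max_zero_neg {α : Type*} [MeasurableSpace α] {μ : Measure α} {f : α → ℝ}
    (hf : Integrable f μ) :
    ∫ t, max 0 (-f t) ∂μ = (∫ t, max 0 (f t) ∂μ) - ∫ t, f t ∂μ := by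
  rw [← integral_sub (by simpa only [max_comm] using hf.pos_part) hf]
  congr 1 with t
  linarith [max_zero_sub_max_neg_zero_eq_self (f t), max_comm (f t) 0, max_comm (-f t) 0]

lemma integral_le_integral_max_zero {α : Type*} [MeasurableSpace α] {μ : Measure α}
    {f : α → ℝ} (hf : Integrable f μ) : ∫ t, f t ∂μ ≤ ∫ t, max 0 (f t) ∂μ := by
  have : 0 ≤ ∫ t, max 0 (-f t) ∂μ := integral_nonneg fun t => le_max_left 0 (-f t)
  linarith [integral_max_zero_neg hf]

lemma le_mul_of_max_zero_le_mul_min {b c d₁ d₂ : ℝ} (h : max 0 b ≤ c * min d₁ d₂)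
    (hd₁ : 0 < d₁) (hd₂ : 0 < d₂) : 0 ≤ c ∧ b ≤ c * d₁ ∧ b ≤ c * d₂ := by
  have hc : 0 ≤ c := nonneg_of_mul_nonneg_left ((le_max_left _ _).trans h) (lt_min hd₁ hd₂)
  have hb : b ≤ c * min d₁ d₂ := (le_max_right _ _).trans h
  exact ⟨hc, hb.trans (by gcongr; exact min_le_left _ _),
    hb.trans (by gcongr; exact min_le_right _ _)⟩

lemma setIntegral_Ioi_zero_indicator_Icc {g : ℝ → ℝ} {a b : ℝ} (ha : 0 ≤ a) :
    ∫ t in Ioi 0, (Icc a b).indicator g t = ∫ t in Icc a b, g t := by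
  rw [setIntegral_congr_set Ioi_ae_eq_Ici, setIntegral_indicator measurableSet_Icc,
    inter_eq_right.2 (Icc_subset_Ici_self.trans (Ici_subset_Ici.2 ha))]

namespace PW1

variable {x : ℕ → ℝ} (hx : Monotone x)

def indicatorIcc (m : ℕ) : PW1 x where
  f := (Icc (x m) (x (m + 1))).indicator 1
  f' := 0
  fr j := if j = m then 1 else 0
  fl j := if j = m + 1 then 1 else 0
  int_d _ := integrableOn_zero
  sq_d _ := by simp
  ftc k t ht := by
    simp only [Pi.zero_apply, integral_zero, add_zero]
    rcases lt_trichotomy k m with hkm | rfl | hkm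
    · rw [if_neg hkm.ne, indicator_of_notMem]
      exact fun h => (ht.2.trans_le (hx hkm)).not_ge h.1
    · rw [if_pos rfl, indicator_of_mem (Ioo_subset_Icc_self ht), Pi.one_apply]
    · rw [if_neg hkm.ne', indicator_of_notMem]
      exact fun h => ((hx hkm).trans_lt ht.1).not_ge h.2
  fl_eq k := by by_cases h : k = m <;> simp [h]

variable {m : ℕ}

lemma mul_sq_indicatorIcc_f (g : ℝ → ℝ) :
    (fun t => g t * (indicatorIcc hx m).f t ^ 2) = (Icc (x m) (x (m + 1))).indicator g := by
  ext t
  by_cases h : t ∈ Icc (x m) (x (m + 1)) <;> simp [indicatorIcc, h]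

lemma sq_indicatorIcc_f :
    (fun t => (indicatorIcc hx m).f t ^ 2) = (Icc (x m) (x (m + 1))).indicator 1 := by
  simpa using mul_sq_indicatorIcc_f hx 1

lemma indicatorIcc_f' : (indicatorIcc hx m).f' = 0 := rfl

lemma jump_indicatorIcc (j : ℕ) :
    (indicatorIcc hx m).jump j = (if j + 1 = m then 1 else 0) - if j = m then 1 else 0 := by
  simp [jump, indicatorIcc]

lemma hasSum_jump_indicatorIcc_sq_mul (w : ℕ → ℝ) :
    HasSum (fun j => (indicatorIcc hx m).jump j ^ 2 * w (j + 1))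
      ((if m = 0 then 0 else w m) + w (m + 1)) := by
  rcases m with _ | s
  · convert hasSum_ite_eq 0 (w 1) using 1
    · ext j; by_cases h : j = 0 <;> simp [jump_indicatorIcc, h]
    · simp
  · convert (hasSum_ite_eq s (w (s + 1))).add (hasSum_ite_eq (s + 1) (w (s + 2))) using 1
    · ext j
      by_cases h : j = s
      · simp [jump_indicatorIcc, h]
      · by_cases h' : j = s + 1 <;> simp [jump_indicatorIcc, h, h']
    · simp

lemma memDom_indicatorIcc {q : ℝ → ℝ} {β : ℕ → ℝ} (hq : IntegrableOn q (Icc (x m) (x (m + 1)))) :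
    MemDom x q β (indicatorIcc hx m) := by
  refine ⟨?_, ?_, ?_, ?_⟩
  · rw [sq_indicatorIcc_f]
    exact (integrableOn_const (C := (1 : ℝ)) measure_Icc_lt_top.ne).integrable_indicator
      measurableSet_Icc |>.integrableOn
  · simp [indicatorIcc_f']
  · rw [mul_sq_indicatorIcc_f hx fun t => |q t|]
    exact (IntegrableOn.integrable_indicator hq.abs measurableSet_Icc).integrableOn
  · simp_rw [div_eq_mul_inv]
    exact (hasSum_jump_indicatorIcc_sq_mul hx fun n => |β n|⁻¹).summable

lemma integral_sq_indicatorIcc_f (h0 : 0 ≤ x m) :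
    ∫ t in Ioi 0, (indicatorIcc hx m).f t ^ 2 = x (m + 1) - x m := by
  rw [sq_indicatorIcc_f, setIntegral_Ioi_zero_indicator_Icc h0]
  simp [hx m.le_succ]

lemma formVal_indicatorIcc {q : ℝ → ℝ} {β : ℕ → ℝ} (h0 : 0 ≤ x m) :
    formVal x q β (indicatorIcc hx m) =
      (∫ t in Icc (x m) (x (m + 1)), q t) + ((if m = 0 then 0 else (β m)⁻¹) + (β (m + 1))⁻¹) := by
  simp only [formVal, div_eq_mul_inv, indicatorIcc_f', Pi.zero_apply, zero_pow two_ne_zero,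
    zero_add, mul_sq_indicatorIcc_f hx q, setIntegral_Ioi_zero_indicator_Icc h0,
    (hasSum_jump_indicatorIcc_sq_mul hx fun n => (β n)⁻¹).tsum_eq]

end PW1

-- `x 0 = 0` is a boundary point, not a node of the form, hence no `1/β` term there.
lemma neg_mul_le_integral_add_inv_of_formVal_ge {x : ℕ → ℝ} {q : ℝ → ℝ} {β : ℕ → ℝ} {C : ℝ}
    {m : ℕ} (hx : Monotone x) (h0 : 0 ≤ x m) (hq : IntegrableOn q (Icc (x m) (x (m + 1))))
    (hsb : ∀ F : PW1 x, MemDom x q β F → formVal x q β F ≥ -C * ∫ t in Ioi (0 : ℝ), F.f t ^ 2) :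
    -C * (x (m + 1) - x m) ≤
      (∫ t in Icc (x m) (x (m + 1)), q t) + ((if m = 0 then 0 else (β m)⁻¹) + (β (m + 1))⁻¹) := by
  simpa only [PW1.formVal_indicatorIcc hx h0, PW1.integral_sq_indicatorIcc_f hx h0] using
    hsb _ (PW1.memDom_indicatorIcc hx hq)

theorem stmt_4_general (x : ℕ → ℝ) (hx0 : x 0 = 0) (hmono : StrictMono x)
    (q : ℝ → ℝ) (hq : ∀ a b : ℝ, 0 ≤ a → IntegrableOn q (Icc a b) volume)
    (β : ℕ → ℝ)
    (C₀' C₁' : ℝ)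
    (hqpos : ∀ k, (1 / (x (k + 1) - x k)) *
      (∫ t in Icc (x k) (x (k + 1)), max 0 (q t)) ≤ C₀')
    (hbpos : ∀ k, max 0 ((β (k + 1))⁻¹) ≤
      C₁' * min (x (k + 1) - x k) (x (k + 2) - x (k + 1)))
    (C : ℝ) (hC : 0 ≤ C)
    (hsb : ∀ F : PW1 x, MemDom x q β F →
      formVal x q β F ≥ -C * ∫ t in Ioi (0 : ℝ), F.f t ^ 2) :
    ∃ Ct : ℝ, 0 ≤ Ct ∧
      (∀ k, (1 / (x (k + 1) - x k)) *
        (∫ t in Icc (x k) (x (k + 1)), max 0 (-q t)) ≤ Ct) ∧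
      (∀ k, max 0 (-(β (k + 1))⁻¹) ≤
        Ct * min (x (k + 1) - x k) (x (k + 2) - x (k + 1))) := by
  have hx_nonneg (m : ℕ) : 0 ≤ x m := hx0 ▸ hmono.monotone m.zero_le
  have hd (m : ℕ) : 0 < x (m + 1) - x m := sub_pos.2 (hmono m.lt_succ_self)
  have hqi (m : ℕ) : IntegrableOn q (Icc (x m) (x (m + 1))) := hq _ _ (hx_nonneg m)
  have key (m : ℕ) := neg_mul_le_integral_add_inv_of_formVal_ge hmono.monotone
    (hx_nonneg m) (hqi m) hsb
  have hq_pos (m : ℕ) :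
      ∫ t in Icc (x m) (x (m + 1)), max 0 (q t) ≤ C₀' * (x (m + 1) - x m) := by
    simpa only [one_div_mul_eq_div, div_le_iff₀ (hd m)] using hqpos m
  have hq_le (m : ℕ) := integral_le_integral_max_zero (hqi m)
  have hC₀ : 0 ≤ C₀' := nonneg_of_mul_nonneg_left
    ((setIntegral_nonneg measurableSet_Icc fun t _ => le_max_left _ _).trans (hq_pos 0)) (hd 0)
  have hβ (k : ℕ) := le_mul_of_max_zero_le_mul_min (hbpos k) (hd k) (hd (k + 1))
  have hC₁ : 0 ≤ C₁' := (hβ 0).1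
  have hβ_prev (m : ℕ) : (if m = 0 then 0 else (β m)⁻¹) ≤ C₁' * (x (m + 1) - x m) := by
    rcases m with _ | m
    · simpa using mul_nonneg hC₁ (hd 0).le
    · exact (hβ m).2.2
  have hCt : 0 ≤ C₀' + 2 * C₁' + C := by positivity
  refine ⟨C₀' + 2 * C₁' + C, hCt, fun k => ?_, fun k => ?_⟩
  · rw [integral_max_zero_neg (hqi k), one_div_mul_eq_div, div_le_iff₀ (hd k)]
    linarith [key k, hq_pos k, hβ_prev k, (hβ k).2.1]
  · have hl : -(β (k + 1))⁻¹ ≤ (C₀' + 2 * C₁' + C) * (x (k + 1) - x k) := by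
      linarith [key k, hq_le k, hq_pos k, hβ_prev k, mul_nonneg hC₁ (hd k).le]
    have hr : -(β (k + 1))⁻¹ ≤ (C₀' + 2 * C₁' + C) * (x (k + 2) - x (k + 1)) := by
      have hk := key (k + 1)
      rw [if_neg k.succ_ne_zero] at hk
      linarith [hq_le (k + 1), hq_pos (k + 1), (hβ (k + 1)).2.1,
        mul_nonneg hC₁ (hd (k + 1)).le]
    rw [mul_min_of_nonneg _ _ hCt]
    exact max_le (le_min (mul_nonneg hCt (hd k).le) (mul_nonneg hCt (hd (k + 1)).le)) (le_min hl hr)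

/-- **Proposition 2.5(iii)**: if `d^* < ∞` and the positive parts satisfy
`sup_k (1/d_k) ∫_Δₖ q₊ < ∞` and `sup_k (1/β_k)⁺/min(d_k,d_{k+1}) < ∞`, then
lower semiboundedness of `t_{X,β,q}` forces the bounds
`(1/d_k) ∫_Δₖ q₋ ≤ C̃` and `(1/β_k)⁻ ≤ C̃ min(d_k, d_{k+1})`. -/
theorem stmt_4 (x : ℕ → ℝ) (hx0 : x 0 = 0) (hmono : StrictMono x)
    (hxtop : Tendsto x atTop atTop)
    (q : ℝ → ℝ) (hq : ∀ a b : ℝ, 0 ≤ a → IntegrableOn q (Icc a b) volume)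
    (β : ℕ → ℝ) (hβ : ∀ k, β (k + 1) ≠ 0)
    (D : ℝ) (hD : ∀ k, x (k + 1) - x k ≤ D)
    (C₀' C₁' : ℝ)
    (hqpos : ∀ k, (1 / (x (k + 1) - x k)) *
      (∫ t in Icc (x k) (x (k + 1)), max 0 (q t)) ≤ C₀')
    (hbpos : ∀ k, max 0 ((β (k + 1))⁻¹) ≤
      C₁' * min (x (k + 1) - x k) (x (k + 2) - x (k + 1)))
    (C : ℝ) (hC : 0 ≤ C)
    (hsb : ∀ F : PW1 x, MemDom x q β F →
      formVal x q β F ≥ -C * ∫ t in Ioi (0 : ℝ), F.f t ^ 2) :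
    ∃ Ct : ℝ, 0 ≤ Ct ∧
      (∀ k, (1 / (x (k + 1) - x k)) *
        (∫ t in Icc (x k) (x (k + 1)), max 0 (-q t)) ≤ Ct) ∧
      (∀ k, max 0 (-(β (k + 1))⁻¹) ≤
        Ct * min (x (k + 1) - x k) (x (k + 2) - x (k + 1))) :=
  stmt_4_general x hx0 hmono q hq β C₀' C₁' hqpos hbpos C hC hsb

end
end

section
/- Suppose there exists C ≥ 0 such that t_{X,β}[f] ≥ −C ∫₀^∞ |f|² dx for all f in the domain of t_{X,β}. Then: (i) (1/β_k)^− ≤ 1 + C/3 for every k; (ii) 1/|β_{k_j}| ≤ C · min{d_j^−, d_{j+1}^−} for every j ≥ 1; (iii) for every j and every i ∈ {1, …, k_{j+1} − k_j}: 1/β_{k_j} + 1/β_{k_j + i} ≥ −C (x_{k_j+i} − x_{k_j}); (iv) for every j and every i ∈ {1, …, k_j − k_{j−1}}: 1/β_{k_j − i} + 1/β_{k_j} ≥ −C (x_{k_j} − x_{k_j − i}). -/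
/-!
Test the lower bound on functions `h · 1_{(x_m, x_n]}` with `h` absolutely continuous on
`[x_m, x_n]`: they lie in the form domain, their only jumps are `h(x_m)` at `x_m` (no jump
term when `m = 0`, since `x_0 = 0` is not a node) and `-h(x_n)` at `x_n`, so the bound reads
`∫ |h'|² + h(x_m)²/β_m + h(x_n)²/β_n ≥ -C ∫ |h|²`.
With `h = 1` this is `1/β_m + 1/β_n ≥ -C (x_n - x_m)`, which is (iii) and (iv) directly and
gives (ii) after discarding the negative term `1/β` at the neighbouring negative node. With the
ramp `h = (x_n + 1 - t)⁺`, cut off at a node `x_N ≥ x_n + 1`, it is `1 + 1/β_n ≥ -C/3`,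
which is (i).
-/

open MeasureTheory Set Filter

noncomputable section

/-- `dminus x κ j` is the paper's `d_{j+1}^- = x_{k_{j+1}} − x_{k_j}` (with `k_0 = 0`),
the distance between the consecutive nodes `x_{k_j}` supporting negative
intensities; `κ j` is the paper's index `k_{j+1}`. -/
def dminus (x : ℕ → ℝ) (κ : ℕ → ℕ) : ℕ → ℝ
  | 0 => x (κ 0) - x 0
  | j + 1 => x (κ (j + 1)) - x (κ j)

/-- `kprev κ j` is the paper's `k_j` when `κ j` is the paper's `k_{j+1}`
(so `kprev κ 0 = k_0 = 0`). -/
def kprev (κ : ℕ → ℕ) : ℕ → ℕ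
  | 0 => 0
  | j + 1 => κ j


lemma indicator_sq (s : Set ℝ) (f : ℝ → ℝ) :
    (fun t => s.indicator f t ^ 2) = s.indicator (fun t => f t ^ 2) :=
  (indicator_comp_of_zero (g := fun y : ℝ => y ^ 2) (zero_pow two_ne_zero)).symm

lemma sub_min_eq_add_integral (b : ℝ) {s t : ℝ} (hst : s ≤ t) :
    b - min t b = b - min s b + ∫ u in Ioc s t, (Iic b).indicator (fun _ => (-1 : ℝ)) u := by
  rw [setIntegral_indicator measurableSet_Iic, Ioc_inter_Iic, setIntegral_const,
    Real.volume_real_Ioc, smul_eq_mul, mul_neg_one]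
  simp only [min_def, max_def]
  split_ifs <;> linarith

lemma integral_indicator_Iic_sq {a b c : ℝ} (hab : a ≤ b) (hbc : b ≤ c) :
    ∫ u in Ioc a c, (Iic b).indicator (fun _ => (-1 : ℝ)) u ^ 2 = b - a := by
  rw [indicator_sq, setIntegral_indicator measurableSet_Iic, Ioc_inter_Iic, min_eq_right hbc]
  simp [hab]

lemma integral_sub_min_sq {a b c : ℝ} (hab : a ≤ b) (hbc : b ≤ c) :
    ∫ u in Ioc a c, (b - min u b) ^ 2 = (b - a) ^ 3 / 3 := by
  have hcont : Continuous fun u : ℝ => (b - min u b) ^ 2 := by fun_prop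
  rw [← intervalIntegral.integral_of_le (hab.trans hbc),
    ← intervalIntegral.integral_add_adjacent_intervals (hcont.intervalIntegrable a b)
      (hcont.intervalIntegrable b c),
    intervalIntegral.integral_congr (a := a) (b := b) (g := fun u => (b - u) ^ 2) fun u hu => ?_,
    intervalIntegral.integral_congr (a := b) (b := c) (g := fun _ => 0) fun u hu => ?_]
  · norm_num [intervalIntegral.integral_comp_sub_left fun u => u ^ 2]
  · rw [uIcc_of_le hbc] at hu
    simp [min_eq_right hu.1]
  · rw [uIcc_of_le hab] at hu
    simp [min_eq_left hu.2]

lemma hasSum_ite_succ_eq (m : ℕ) (c : ℝ) :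
    HasSum (fun k : ℕ => if k + 1 = m then c else 0) (if m = 0 then 0 else c) := by
  cases m with
  | zero => simp
  | succ m => simpa using hasSum_ite_eq m c

namespace PW1

variable {x : ℕ → ℝ}

section

variable {m n k : ℕ} {t : ℝ} {h h' : ℝ → ℝ}

lemma Ioc_subset_Ioc_of_le_of_lt (hx : Monotone x) (hmk : m ≤ k) (hkn : k < n)
    (ht : t ≤ x (k + 1)) : Ioc (x k) t ⊆ Ioc (x m) (x n) :=
  Ioc_subset_Ioc (hx hmk) (ht.trans (hx hkn))

lemma disjoint_Ioc_of_not_le_of_lt (hx : Monotone x) (hk : ¬(m ≤ k ∧ k < n))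
    (ht : t ≤ x (k + 1)) : Disjoint (Ioc (x k) t) (Ioc (x m) (x n)) := by
  rw [not_and_or, not_le, not_lt] at hk
  rcases hk with hkm | hnk
  · exact Ioc_disjoint_Ioc_of_le (ht.trans (hx hkm))
  · exact (Ioc_disjoint_Ioc_of_le (hx hnk)).symm

lemma indicator_Ioc_eq_add_integral (hx : Monotone x)
    (hftc : ∀ s t, x m ≤ s → s ≤ t → t ≤ x n → h t = h s + ∫ u in Ioc s t, h' u)
    (ht : t ∈ Ioc (x k) (x (k + 1))) :
    (Ioc (x m) (x n)).indicator h t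
      = (if m ≤ k ∧ k < n then h (x k) else 0)
        + ∫ u in Ioc (x k) t, (Ioc (x m) (x n)).indicator h' u := by
  rw [setIntegral_indicator measurableSet_Ioc]
  split_ifs with hk
  · have hsub := Ioc_subset_Ioc_of_le_of_lt hx hk.1 hk.2 ht.2
    have htmem : t ∈ Ioc (x m) (x n) := hsub ⟨ht.1, le_rfl⟩
    rw [indicator_of_mem htmem, inter_eq_left.2 hsub]
    exact hftc _ _ (hx hk.1) ht.1.le htmem.2
  · have hdisj := disjoint_Ioc_of_not_le_of_lt hx hk ht.2
    rw [indicator_of_notMem (hdisj.notMem_of_mem_left ⟨ht.1, le_rfl⟩), hdisj.inter_eq]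
    simp

end

def indicatorIoc (hx : StrictMono x) (m n : ℕ) (h h' : ℝ → ℝ)
    (hint : IntegrableOn h' (Ioc (x m) (x n)))
    (hsq : IntegrableOn (fun t => h' t ^ 2) (Ioc (x m) (x n)))
    (hftc : ∀ s t, x m ≤ s → s ≤ t → t ≤ x n → h t = h s + ∫ u in Ioc s t, h' u) :
    PW1 x where
  f := (Ioc (x m) (x n)).indicator h
  f' := (Ioc (x m) (x n)).indicator h'
  fr k := if m ≤ k ∧ k < n then h (x k) else 0
  fl k := if m < k ∧ k ≤ n then h (x k) else 0
  int_d _ := (hint.integrable_indicator measurableSet_Ioc).integrableOn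
  sq_d _ := by
    rw [indicator_sq]
    exact (hsq.integrable_indicator measurableSet_Ioc).integrableOn
  ftc _ _ ht := indicator_Ioc_eq_add_integral hx.monotone hftc (Ioo_subset_Ioc_self ht)
  fl_eq k := by
    rw [← indicator_Ioc_eq_add_integral hx.monotone hftc (right_mem_Ioc.2 (hx k.lt_succ_self)),
      indicator_apply]
    simp only [mem_Ioc, hx.lt_iff_lt, hx.le_iff_le]

variable {m n : ℕ} {h h' : ℝ → ℝ} (hx : StrictMono x)
  (hint : IntegrableOn h' (Ioc (x m) (x n)))
  (hsq : IntegrableOn (fun t => h' t ^ 2) (Ioc (x m) (x n)))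
  (hftc : ∀ s t, x m ≤ s → s ≤ t → t ≤ x n → h t = h s + ∫ u in Ioc s t, h' u)

lemma jump_indicatorIoc (hmn : m ≤ n) (k : ℕ) :
    (indicatorIoc hx m n h h' hint hsq hftc).jump k
      = (if k + 1 = m then h (x m) else 0) - (if k + 1 = n then h (x n) else 0) := by
  simp only [jump, indicatorIoc]
  split_ifs <;> first | omega | (subst_vars; ring)

lemma jump_sq_div_indicatorIoc (hmn : m < n) (γ : ℕ → ℝ) (k : ℕ) :
    (indicatorIoc hx m n h h' hint hsq hftc).jump k ^ 2 / γ (k + 1)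
      = (if k + 1 = m then h (x m) ^ 2 / γ m else 0)
        + (if k + 1 = n then h (x n) ^ 2 / γ n else 0) := by
  rw [jump_indicatorIoc hx hint hsq hftc hmn.le]
  split_ifs <;> first | omega | (subst_vars; ring)

lemma hasSum_jump_sq_div_indicatorIoc (hmn : m < n) (γ : ℕ → ℝ) :
    HasSum (fun k => (indicatorIoc hx m n h h' hint hsq hftc).jump k ^ 2 / γ (k + 1))
      ((if m = 0 then 0 else h (x m) ^ 2 / γ m) + h (x n) ^ 2 / γ n) := by
  simp only [jump_sq_div_indicatorIoc hx hint hsq hftc hmn]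
  simpa [(Nat.zero_le m).trans_lt hmn |>.ne'] using
    (hasSum_ite_succ_eq m _).add (hasSum_ite_succ_eq n (h (x n) ^ 2 / γ n))

lemma setIntegral_Ioi_zero_indicator_sq {a b : ℝ} (ha : 0 ≤ a) (g : ℝ → ℝ) :
    ∫ t in Ioi (0 : ℝ), (Ioc a b).indicator g t ^ 2 = ∫ t in Ioc a b, g t ^ 2 := by
  rw [indicator_sq, setIntegral_indicator measurableSet_Ioc,
    inter_eq_right.2 (show Ioc a b ⊆ Ioi 0 from fun t ht => ha.trans_lt ht.1)]

lemma memDom_indicatorIoc (hmn : m < n) (β : ℕ → ℝ)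
    (hh : IntegrableOn (fun t => h t ^ 2) (Ioc (x m) (x n))) :
    MemDom x (fun _ => 0) β (indicatorIoc hx m n h h' hint hsq hftc) := by
  refine ⟨?_, ?_, ?_, (hasSum_jump_sq_div_indicatorIoc hx hint hsq hftc hmn (|β ·|)).summable⟩
  · simp only [indicatorIoc, indicator_sq]
    exact (hh.integrable_indicator measurableSet_Ioc).integrableOn
  · simp only [indicatorIoc, indicator_sq]
    exact (hsq.integrable_indicator measurableSet_Ioc).integrableOn
  · simp only [abs_zero, zero_mul]
    exact integrableOn_zero

lemma formVal_indicatorIoc (hx0 : x 0 = 0) (hmn : m < n) (β : ℕ → ℝ) :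
    formVal x (fun _ => 0) β (indicatorIoc hx m n h h' hint hsq hftc)
      = (∫ t in Ioc (x m) (x n), h' t ^ 2)
        + ((if m = 0 then 0 else h (x m) ^ 2 / β m) + h (x n) ^ 2 / β n) := by
  rw [formVal, (hasSum_jump_sq_div_indicatorIoc hx hint hsq hftc hmn β).tsum_eq]
  simp only [zero_mul, add_zero]
  rw [← setIntegral_Ioi_zero_indicator_sq (hx0 ▸ hx.monotone m.zero_le)]
  rfl

end PW1

def FormBoundedBelow (x : ℕ → ℝ) (β : ℕ → ℝ) (C : ℝ) : Prop :=
  ∀ F : PW1 x, MemDom x (fun _ => 0) β F →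
    formVal x (fun _ => 0) β F ≥ -C * ∫ t in Ioi (0 : ℝ), F.f t ^ 2

namespace FormBoundedBelow

variable {x β : ℕ → ℝ} {C : ℝ} {m n : ℕ}

lemma indicatorIoc_ge (hβC : FormBoundedBelow x β C) (hx0 : x 0 = 0) (hx : StrictMono x)
    (hmn : m < n) {h h' : ℝ → ℝ} (hint : IntegrableOn h' (Ioc (x m) (x n)))
    (hsq : IntegrableOn (fun t => h' t ^ 2) (Ioc (x m) (x n)))
    (hftc : ∀ s t, x m ≤ s → s ≤ t → t ≤ x n → h t = h s + ∫ u in Ioc s t, h' u)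
    (hh : IntegrableOn (fun t => h t ^ 2) (Ioc (x m) (x n))) :
    (∫ t in Ioc (x m) (x n), h' t ^ 2)
        + ((if m = 0 then 0 else h (x m) ^ 2 / β m) + h (x n) ^ 2 / β n)
      ≥ -C * ∫ t in Ioc (x m) (x n), h t ^ 2 := by
  have hf : ∫ t in Ioi 0, (PW1.indicatorIoc hx m n h h' hint hsq hftc).f t ^ 2
      = ∫ t in Ioc (x m) (x n), h t ^ 2 :=
    PW1.setIntegral_Ioi_zero_indicator_sq (hx0 ▸ hx.monotone m.zero_le) h
  have := hβC _ (PW1.memDom_indicatorIoc hx hint hsq hftc hmn β hh)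
  rwa [PW1.formVal_indicatorIoc hx hint hsq hftc hx0 hmn, hf] at this

lemma inv_add_inv_ge (hβC : FormBoundedBelow x β C) (hx0 : x 0 = 0) (hx : StrictMono x)
    (hmn : m < n) :
    (if m = 0 then 0 else (β m)⁻¹) + (β n)⁻¹ ≥ -C * (x n - x m) := by
  have := hβC.indicatorIoc_ge hx0 hx hmn (h := fun _ => 1) (h' := fun _ => 0) integrableOn_zero
    (by simp) (by simp) (integrableOn_const measure_Ioc_lt_top.ne)
  simpa [Real.volume_real_Ioc_of_le (hx hmn).le] using this

lemma neg_inv_le (hβC : FormBoundedBelow x β C) (hx0 : x 0 = 0) (hx : StrictMono x)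
    (hxtop : Tendsto x atTop atTop) (hn : n ≠ 0) :
    -(β n)⁻¹ ≤ 1 + C / 3 := by
  set b := x n + 1
  obtain ⟨N, hnN, hbN⟩ : ∃ N, n < N ∧ b ≤ x N :=
    ((eventually_gt_atTop n).and (hxtop.eventually_ge_atTop b)).exists
  have hab : x n ≤ b := by linarith
  have := hβC.indicatorIoc_ge hx0 hx hnN (h := fun t => b - min t b)
    (h' := (Iic b).indicator fun _ => -1)
    ((integrableOn_const measure_Ioc_lt_top.ne).indicator measurableSet_Iic)
    (by
      rw [indicator_sq]
      exact (integrableOn_const measure_Ioc_lt_top.ne).indicator measurableSet_Iic)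
    (fun s t _ hst _ => sub_min_eq_add_integral b hst)
    (Continuous.integrableOn_Ioc (by fun_prop))
  have hb : b - x n = 1 := add_sub_cancel_left _ _
  rw [integral_indicator_Iic_sq hab hbN, integral_sub_min_sq hab hbN, if_neg hn,
    min_eq_left hab, min_eq_right hbN, hb, sub_self] at this
  norm_num at this
  linarith

end FormBoundedBelow

theorem stmt_6_general (x : ℕ → ℝ) (hx0 : x 0 = 0) (hmono : StrictMono x)
    (hxtop : Tendsto x atTop atTop)
    (β : ℕ → ℝ)
    (κ : ℕ → ℕ) (hκmono : StrictMono κ) (hκ1 : ∀ j, 1 ≤ κ j)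
    (hκneg : ∀ j, β (κ j) < 0)
    (C : ℝ) (hC : 0 ≤ C)
    (hsb : ∀ F : PW1 x, MemDom x (fun _ => 0) β F →
      formVal x (fun _ => 0) β F ≥ -C * ∫ t in Ioi (0 : ℝ), F.f t ^ 2) :
    (∀ k, max 0 (-(β (k + 1))⁻¹) ≤ 1 + C / 3) ∧
    (∀ j, 1 / |β (κ j)| ≤ C * min (dminus x κ j) (dminus x κ (j + 1))) ∧
    (∀ j i, 1 ≤ i → κ j + i ≤ κ (j + 1) →
      (β (κ j))⁻¹ + (β (κ j + i))⁻¹ ≥ -C * (x (κ j + i) - x (κ j))) ∧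
    (∀ j i, 1 ≤ i → kprev κ j + i ≤ κ j → 1 ≤ κ j - i →
      (β (κ j - i))⁻¹ + (β (κ j))⁻¹ ≥ -C * (x (κ j) - x (κ j - i))) := by
  have hbdd : FormBoundedBelow x β C := hsb
  have hstep {m n : ℕ} (hmn : m < n) := hbdd.inv_add_inv_ge hx0 hmono hmn
  have hκ0 (j : ℕ) : κ j ≠ 0 := Nat.one_le_iff_ne_zero.1 (hκ1 j)
  have hinv (j : ℕ) : (β (κ j))⁻¹ < 0 := inv_lt_zero.2 (hκneg j)
  refine ⟨fun k => max_le (by linarith) (hbdd.neg_inv_le hx0 hmono hxtop k.succ_ne_zero),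
    fun j => ?_, fun j i hi _ => ?_, fun j i _ _ hi => ?_⟩
  · have hright := hstep (hκmono j.lt_succ_self)
    rw [if_neg (hκ0 j)] at hright
    rw [abs_of_neg (hκneg j), one_div, inv_neg, mul_min_of_nonneg _ _ hC]
    refine le_min ?_ (by simp only [dminus]; linarith [hinv (j + 1)])
    cases j with
    | zero =>
      have hleft := hstep (hκ1 0)
      simp only [if_pos, zero_add] at hleft
      simp only [dminus, hx0] at hleft ⊢
      linarith
    | succ j =>
      have hleft := hstep (hκmono j.lt_succ_self)
      rw [if_neg (hκ0 j)] at hleft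
      simp only [dminus]
      linarith [hinv j]
  · simpa [hκ0 j] using hstep (show κ j < κ j + i by omega)
  · simpa [show κ j - i ≠ 0 by omega] using hstep (show κ j - i < κ j by omega)

/-- **Lemma 2.10**: necessary conditions for lower semiboundedness of the form
`t_{X,β}` (the case `q = 0`), where `x_{κ j}` enumerates the nodes with
negative intensities (`κ j` is the paper's `k_{j+1}`). -/
theorem stmt_6 (x : ℕ → ℝ) (hx0 : x 0 = 0) (hmono : StrictMono x)
    (hxtop : Tendsto x atTop atTop)
    (β : ℕ → ℝ) (hβ : ∀ k, β (k + 1) ≠ 0)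
    (κ : ℕ → ℕ) (hκmono : StrictMono κ) (hκ1 : ∀ j, 1 ≤ κ j)
    (hκneg : ∀ j, β (κ j) < 0)
    (hκall : ∀ n, 1 ≤ n → β n < 0 → ∃ j, κ j = n)
    (C : ℝ) (hC : 0 ≤ C)
    (hsb : ∀ F : PW1 x, MemDom x (fun _ => 0) β F →
      formVal x (fun _ => 0) β F ≥ -C * ∫ t in Ioi (0 : ℝ), F.f t ^ 2) :
    (∀ k, max 0 (-(β (k + 1))⁻¹) ≤ 1 + C / 3) ∧
    (∀ j, 1 / |β (κ j)| ≤ C * min (dminus x κ j) (dminus x κ (j + 1))) ∧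
    (∀ j i, 1 ≤ i → κ j + i ≤ κ (j + 1) →
      (β (κ j))⁻¹ + (β (κ j + i))⁻¹ ≥ -C * (x (κ j + i) - x (κ j))) ∧
    (∀ j i, 1 ≤ i → kprev κ j + i ≤ κ j → 1 ≤ κ j - i →
      (β (κ j - i))⁻¹ + (β (κ j))⁻¹ ≥ -C * (x (κ j) - x (κ j - i))) :=
  stmt_6_general x hx0 hmono hxtop β κ hκmono hκ1 hκneg C hC hsb

end
end
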